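/- arXiv:2510.10291 — 10 statements merged into one kernel-verified Lean document; each statement's English description precedes it below -/
import Mathlib

section
/- In the Cayley graph of Z^d with the standard generating set S = {v : ||v||_1 = 1}, for all positive integers m and r, the triple (U, F, O) with U = [0,r-1]^{d-1} × [-3^{d-1}m, -1], F = [-r, 2r-1]^{d-1} × {0}, and O = [0,r-1]^{d-1} × [1, 3^{d-1}m] forms an (m, 3^{d-1}m + 1, 2r+4)-UFO. -/
open SimpleGraph Pointwise

/-- An `(m,k,r)`-UFO in a graph `G`: a triple `(U,F,O)` of disjoint finite vertex sets such that
`|U| ≥ m|F|`, there is a complete matching between `U` and `O` by paths of length at most `k`,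
and every path from `U` to `O` avoiding `F` has length at least `r`. -/
def IsUFO {V : Type*} (G : SimpleGraph V) (m k r : ℕ) (U F O : Set V) : Prop :=
  U.Nonempty ∧ U.Finite ∧ F.Finite ∧ O.Finite ∧
    Disjoint U F ∧ Disjoint U O ∧ Disjoint F O ∧
    m * F.ncard ≤ U.ncard ∧
    (∃ f : V → V, Set.BijOn f U O ∧ ∀ u ∈ U, G.Reachable u (f u) ∧ G.dist u (f u) ≤ k) ∧
    ∀ u ∈ U, ∀ o ∈ O, ∀ p : G.Walk u o, (∀ x ∈ p.support, x ∉ F) → r ≤ p.length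

/-- A graph is extraterrestrial if for all `m` there is `k` such that for all `r` it admits an
`(m,k,r)`-UFO. -/
def Extraterrestrial {V : Type*} (G : SimpleGraph V) : Prop :=
  ∀ m : ℕ, ∃ k : ℕ, ∀ r : ℕ, ∃ U F O : Set V, IsUFO G m k r U F O
/-- The canonical Cayley graph of `ℤ^d`, with generating set the standard basis vectors and
their negatives: two vertices are adjacent iff their `ℓ¹`-distance is `1`. -/
def zdGraph (d : ℕ) : SimpleGraph (Fin d → ℤ) where
  Adj x y := (∑ i, |x i - y i|) = 1
  symm := ⟨by intro x y h; simpa [abs_sub_comm] using h⟩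
  loopless := ⟨by intro x h; simp at h⟩

/-!
The ℓ¹ distance bounds the length of every walk in the Cayley graph from below. Translating by
`(3^{d-1} m + 1) e_d` matches `U` with `O` along walks of exactly that length, and
`|U| = r^{d-1} · 3^{d-1} m = m |F|`. A walk from `U` (where `x_d < 0`) to `O` (where `x_d > 0`)
meets the hyperplane `x_d = 0`, since each step changes a coordinate by at most one. If it avoids
`F`, the meeting point has a coordinate outside `[-r, 2r-1]`, so it lies at ℓ¹-distance at least
`r + 2` from both `U` and `O`.
-/

namespace zdGraph

variable {d : ℕ}

lemma abs_sub_le_one_of_adj {x y : Fin d → ℤ} (h : (zdGraph d).Adj x y) (j : Fin d) :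
    |x j - y j| ≤ 1 :=
  (Finset.single_le_sum (f := fun i => |x i - y i|) (fun _ _ => abs_nonneg _)
    (Finset.mem_univ j)).trans_eq h

lemma adj_add_single (x : Fin d → ℤ) (j : Fin d) : (zdGraph d).Adj x (x + Pi.single j 1) := by
  show ∑ i, |x i - (x + Pi.single j 1 : Fin d → ℤ) i| = 1
  simp [Pi.single_apply, apply_ite]

lemma exists_walk_add_single (j : Fin d) (s : ℕ) (x : Fin d → ℤ) :
    ∃ p : (zdGraph d).Walk x (x + Pi.single j (s : ℤ)), p.length = s := by
  induction s generalizing x with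
  | zero => exact ⟨Walk.nil.copy rfl (by simp), by simp⟩
  | succ s ih =>
    obtain ⟨p, hp⟩ := ih (x + Pi.single j 1)
    have hend : x + Pi.single j 1 + Pi.single j (s : ℤ) = x + Pi.single j ((s + 1 : ℕ) : ℤ) := by
      rw [add_assoc, ← Pi.single_add]; push_cast; ring_nf
    exact ⟨Walk.cons (adj_add_single x j) (p.copy rfl hend), by simp [hp]⟩

lemma sum_abs_sub_le_length {x y : Fin d → ℤ} (p : (zdGraph d).Walk x y) :
    ∑ i, |x i - y i| ≤ p.length := by
  induction p with
  | nil => simp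
  | @cons a b c h q ih =>
    have hstep : ∑ i, |a i - c i| ≤ ∑ i, |a i - b i| + ∑ i, |b i - c i| := by
      rw [← Finset.sum_add_distrib]
      exact Finset.sum_le_sum fun i _ => abs_sub_le _ _ _
    have hab : ∑ i, |a i - b i| = 1 := h
    push_cast [Walk.length_cons]
    linarith

lemma sum_abs_sub_add_sum_abs_sub_le_length {x y w : Fin d → ℤ} (p : (zdGraph d).Walk x y)
    (hw : w ∈ p.support) :
    ∑ i, |x i - w i| + ∑ i, |w i - y i| ≤ p.length := by
  have hsplit := congrArg Walk.length (p.take_spec hw)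
  rw [Walk.length_append] at hsplit
  have := sum_abs_sub_le_length (p.takeUntil w hw)
  have := sum_abs_sub_le_length (p.dropUntil w hw)
  omega

lemma exists_mem_support_apply_eq (j : Fin d) {c : ℤ} {x y : Fin d → ℤ}
    (p : (zdGraph d).Walk x y) (hx : x j ≤ c) (hy : c ≤ y j) :
    ∃ w ∈ p.support, w j = c := by
  induction p with
  | nil => exact ⟨_, Walk.start_mem_support _, le_antisymm hx hy⟩
  | @cons a b _ h q ih =>
    by_cases hac : a j = c
    · exact ⟨a, Walk.start_mem_support _, hac⟩
    · have hb : b j ≤ c := by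
        have := abs_le.mp (abs_sub_le_one_of_adj h j)
        omega
      obtain ⟨w, hw, hwc⟩ := ih hb hy
      exact ⟨w, by simp [hw], hwc⟩

end zdGraph

section Prism

variable {α : Type*} {n : ℕ}

def prism (n : ℕ) (S T : Set α) : Set (Fin (n + 1) → α) :=
  {x | (∀ i : Fin n, x i.castSucc ∈ S) ∧ x (Fin.last n) ∈ T}

lemma prism_eq_univ_pi (S T : Set α) :
    prism n S T = Set.univ.pi (Fin.snoc (fun _ : Fin n => S) T) := by
  ext x
  simp only [prism, Set.mem_ofPred_eq, Set.mem_univ_pi, Fin.forall_fin_succ', Fin.snoc_castSucc,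
    Fin.snoc_last]

lemma prism_finite {S T : Set α} (hS : S.Finite) (hT : T.Finite) : (prism n S T).Finite := by
  rw [prism_eq_univ_pi]
  refine Set.Finite.pi fun i => ?_
  induction i using Fin.lastCases with
  | last => simpa using hT
  | cast i => simpa using hS

lemma prism_nonempty {S T : Set α} (hS : S.Nonempty) (hT : T.Nonempty) :
    (prism n S T).Nonempty := by
  rw [prism_eq_univ_pi, Set.univ_pi_nonempty_iff]
  intro i
  induction i using Fin.lastCases with
  | last => simpa using hT
  | cast i => simpa using hS

lemma ncard_prism (S T : Set α) : (prism n S T).ncard = S.ncard ^ n * T.ncard := by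
  rw [prism_eq_univ_pi, ← Nat.card_coe_set_eq, Nat.card_congr (Equiv.Set.univPi _), Nat.card_pi,
    Fin.prod_univ_castSucc]
  simp [Nat.card_coe_set_eq]

lemma disjoint_prism {S S' T T' : Set α} (h : Disjoint T T') :
    Disjoint (prism n S T) (prism n S' T') :=
  Set.disjoint_left.2 fun _ hx hx' => h.notMem_of_mem_left hx.2 hx'.2

lemma bijOn_add_single_last_prism [AddGroup α] (S T : Set α) (c : α) :
    Set.BijOn (· + Pi.single (Fin.last n) c) (prism n S T) (prism n S ((· + c) '' T)) := by
  have hcast (i : Fin n) : (Pi.single (Fin.last n) c : Fin (n + 1) → α) i.castSucc = 0 :=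
    Pi.single_eq_of_ne (Fin.castSucc_lt_last i).ne _
  refine ⟨fun x hx => ⟨fun i => ?_, ?_⟩, (add_left_injective _).injOn, fun y hy => ?_⟩
  · simpa [hcast] using hx.1 i
  · simpa using hx.2
  · obtain ⟨t, ht, hty⟩ := hy.2
    refine ⟨y - Pi.single (Fin.last n) c, ⟨fun i => by simpa [hcast] using hy.1 i, ?_⟩,
      sub_add_cancel y _⟩
    simpa [← hty] using ht

end Prism

lemma zdGraph.le_length_of_forall_mem_support_notMem_prism {n : ℕ} {r : ℤ}
    {u o : Fin (n + 1) → ℤ} (p : (zdGraph (n + 1)).Walk u o)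
    (hu : u ∈ prism n (Set.Ico 0 r) (Set.Iic (-1))) (ho : o ∈ prism n (Set.Ico 0 r) (Set.Ici 1))
    (hp : ∀ x ∈ p.support, x ∉ prism n (Set.Icc (-r) (2 * r - 1)) {0}) :
    2 * r + 4 ≤ p.length := by
  obtain ⟨w, hw, hw0⟩ := exists_mem_support_apply_eq (Fin.last n) (c := 0) p
    (hu.2.trans (by norm_num)) (le_trans (by norm_num) ho.2)
  obtain ⟨i, hi⟩ : ∃ i : Fin n, w i.castSucc ∉ Set.Icc (-r) (2 * r - 1) := by
    by_contra! h
    exact hp w hw ⟨h, hw0⟩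
  have hne := (Fin.castSucc_lt_last i).ne
  have hu_w := Finset.add_le_sum (f := fun j => |u j - w j|) (fun _ _ => abs_nonneg _)
    (Finset.mem_univ _) (Finset.mem_univ _) hne
  have hw_o := Finset.add_le_sum (f := fun j => |w j - o j|) (fun _ _ => abs_nonneg _)
    (Finset.mem_univ _) (Finset.mem_univ _) hne
  have hlen := sum_abs_sub_add_sum_abs_sub_le_length p hw
  have hul : u (Fin.last n) ≤ -1 := hu.2
  have hol : 1 ≤ o (Fin.last n) := ho.2
  obtain ⟨hui0, huir⟩ := hu.1 i
  obtain ⟨hoi0, hoir⟩ := ho.1 i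
  simp only [hw0] at hu_w hw_o
  rw [Set.mem_Icc, not_and_or, not_le, not_le] at hi
  rcases hi with hi | hi <;>
    linarith [le_abs_self (u i.castSucc - w i.castSucc), neg_le_abs (u i.castSucc - w i.castSucc),
      le_abs_self (w i.castSucc - o i.castSucc), neg_le_abs (w i.castSucc - o i.castSucc),
      neg_le_abs (u (Fin.last n) - 0), neg_le_abs (0 - o (Fin.last n))]

/-- In the Cayley graph of `ℤ^d` (`d = n+1`) with the standard generators, for all positive
`m, r`, the triple `(U,F,O)` with `U = [0,r-1]^{d-1} × [-3^{d-1}m, -1]`,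
`F = [-r,2r-1]^{d-1} × {0}`, `O = [0,r-1]^{d-1} × [1, 3^{d-1}m]` is an
`(m, 3^{d-1}m + 1, 2r+4)`-UFO. -/
theorem stmt_0 (n m r : ℕ) (hm : 0 < m) (hr : 0 < r) :
    IsUFO (zdGraph (n + 1)) m (3 ^ n * m + 1) (2 * r + 4)
      {x | (∀ i : Fin n, x i.castSucc ∈ Set.Ico (0 : ℤ) (r : ℤ)) ∧
        x (Fin.last n) ∈ Set.Icc (-(3 ^ n * m : ℤ)) (-1 : ℤ)}
      {x | (∀ i : Fin n, x i.castSucc ∈ Set.Icc (-(r : ℤ)) (2 * (r : ℤ) - 1)) ∧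
        x (Fin.last n) = 0}
      {x | (∀ i : Fin n, x i.castSucc ∈ Set.Ico (0 : ℤ) (r : ℤ)) ∧
        x (Fin.last n) ∈ Set.Icc (1 : ℤ) ((3 : ℤ) ^ n * m)} := by
  change IsUFO _ m _ _ (prism n (Set.Ico (0 : ℤ) r) (Set.Icc (-(3 ^ n * m)) (-1)))
    (prism n (Set.Icc (-(r : ℤ)) (2 * r - 1)) {0})
    (prism n (Set.Ico (0 : ℤ) r) (Set.Icc 1 (3 ^ n * m)))
  have hshift : (· + ((3 ^ n * m + 1 : ℕ) : ℤ)) '' Set.Icc (-(3 ^ n * m)) (-1) =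
      Set.Icc 1 ((3 : ℤ) ^ n * m) := by
    rw [Set.image_add_const_Icc]; push_cast; ring_nf
  refine ⟨prism_nonempty ⟨0, by simpa⟩ ⟨-1, ?_⟩,
    prism_finite (Set.finite_Ico _ _) (Set.finite_Icc _ _),
    prism_finite (Set.finite_Icc _ _) (Set.finite_singleton _),
    prism_finite (Set.finite_Ico _ _) (Set.finite_Icc _ _),
    disjoint_prism (by simp), disjoint_prism ?_, disjoint_prism (by simp), ?_,
    ⟨_, hshift ▸ bijOn_add_single_last_prism _ _ _, fun u _ => ?_⟩,
    fun u hu o ho p hp => ?_⟩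
  · exact Set.right_mem_Icc.2 <| neg_le_neg <|
      one_le_mul_of_one_le_of_one_le (one_le_pow₀ (by norm_num)) (by exact_mod_cast hm)
  · exact Set.disjoint_left.2 fun x hx hx' => by linarith [hx.2, hx'.1]
  · simp only [ncard_prism, Set.ncard_singleton, ← Finset.coe_Icc, ← Finset.coe_Ico,
      Set.ncard_coe_finset, Int.card_Icc, Int.card_Ico]
    have h3r : (2 * (r : ℤ) - 1 + 1 - -r).toNat = 3 * r := by omega
    have hK : (-1 + 1 - -((3 : ℤ) ^ n * m)).toNat = 3 ^ n * m := by
      rw [show -1 + 1 - -((3 : ℤ) ^ n * m) = ((3 ^ n * m : ℕ) : ℤ) by push_cast; ring]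
      exact Int.toNat_natCast _
    simp only [sub_zero, Int.toNat_natCast, h3r, hK]
    exact le_of_eq (by ring)
  · obtain ⟨p, hp⟩ := zdGraph.exists_walk_add_single (Fin.last n) (3 ^ n * m + 1) u
    exact ⟨p.reachable, (dist_le p).trans hp.le⟩
  · exact_mod_cast zdGraph.le_length_of_forall_mem_support_notMem_prism p ⟨hu.1, hu.2.2⟩
      ⟨ho.1, ho.2.1⟩ hp
end

section
/- The canonical Cayley graph of Z^d (with generating set the standard basis vectors and their negatives) is extraterrestrial: for every m there exists k such that for every r there is an (m,k,r)-UFO. -/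
open SimpleGraph Pointwise

/-! The ℓ∞-ball `U` of radius `n`, its outer shell `F` and a translate `O` of `U` that misses
`U ∪ F` form a UFO: a walk leaving `U` first steps into `F`, so every `U`–`O` path meets `F`,
and translation matches `U` with `O` by paths of length `d(2n+2)`, independent of `r`.
The shell has `(2n+3)^d - (2n+1)^d ≤ 2d(2n+3)^(d-1) ≤ 2d·3^(d-1)(2n+1)^(d-1)` points, at most
`|U| / m` once `m d 3^d ≤ n`. -/

open Finset

noncomputable def supBall (d n : ℕ) : Finset (Fin d → ℤ) :=
  Fintype.piFinset fun _ => Icc (-n : ℤ) n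

variable {d : ℕ}

lemma mem_supBall {n : ℕ} {x : Fin d → ℤ} : x ∈ supBall d n ↔ ∀ i, |x i| ≤ n := by
  simp [supBall, abs_le]

lemma supBall_mono : Monotone (supBall d) := fun _ _ h _ hx =>
  mem_supBall.2 fun i => (mem_supBall.1 hx i).trans (by exact_mod_cast h)

lemma card_supBall (n : ℕ) : #(supBall d n) = (2 * n + 1) ^ d := by
  simp only [supBall, Fintype.card_piFinset, Int.card_Icc, prod_const, card_univ, Fintype.card_fin]
  congr 1
  omega

lemma card_supBall_succ_sdiff_le (n : ℕ) :
    #(supBall d (n + 1) \ supBall d n) ≤ 2 * d * (2 * n + 3) ^ (d - 1) := by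
  rw [card_sdiff_of_subset (supBall_mono n.le_succ), card_supBall, card_supBall,
    show 2 * (n + 1) + 1 = 2 * n + 3 by ring]
  have hle : (2 * n + 1) ^ d ≤ (2 * n + 3) ^ d := Nat.pow_le_pow_left (by omega) d
  have key := (le_abs_self _).trans (abs_pow_sub_pow_le (2 * n + 3 : ℤ) (2 * n + 1) d)
  rw [abs_of_nonneg (by positivity : (0 : ℤ) ≤ 2 * n + 3),
    abs_of_nonneg (by positivity : (0 : ℤ) ≤ 2 * n + 1), max_eq_left (by linarith),
    add_sub_add_left_eq_sub] at key
  norm_num at key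
  zify [hle]
  linarith

lemma mul_card_supBall_succ_sdiff_le {m n : ℕ} (h : m * d * 3 ^ d ≤ n) :
    m * #(supBall d (n + 1) \ supBall d n) ≤ #(supBall d n) := by
  refine (Nat.mul_le_mul_left m (card_supBall_succ_sdiff_le n)).trans ?_
  rw [card_supBall]
  obtain _ | e := d
  · simp
  calc m * (2 * (e + 1) * (2 * n + 3) ^ e)
      ≤ m * (2 * (e + 1) * (3 ^ e * (2 * n + 1) ^ e)) := by
        rw [← mul_pow]; gcongr; omega
    _ = 2 * (m * (e + 1) * 3 ^ e) * (2 * n + 1) ^ e := by ring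
    _ ≤ (2 * n + 1) * (2 * n + 1) ^ e := by gcongr; rw [pow_succ] at h; nlinarith
    _ = (2 * n + 1) ^ (e + 1) := by ring

lemma abs_sub_le_one_of_adj {x y : Fin d → ℤ} (h : (zdGraph d).Adj x y) (i : Fin d) :
    |x i - y i| ≤ 1 :=
  h ▸ single_le_sum (f := fun j => |x j - y j|) (fun _ _ => abs_nonneg _) (mem_univ i)

lemma mem_supBall_succ_of_adj {n : ℕ} {x y : Fin d → ℤ} (hx : x ∈ supBall d n)
    (h : (zdGraph d).Adj x y) : y ∈ supBall d (n + 1) := by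
  refine mem_supBall.2 fun i => ?_
  have := abs_sub_abs_le_abs_sub (y i) (x i)
  have := abs_sub_comm (x i) (y i) ▸ abs_sub_le_one_of_adj h i
  have := mem_supBall.1 hx i
  push_cast
  linarith

lemma exists_mem_support_mem_supBall_succ_sdiff {n : ℕ} {u o : Fin d → ℤ}
    (hu : u ∈ supBall d n) (ho : o ∉ supBall d n) (p : (zdGraph d).Walk u o) :
    ∃ x ∈ p.support, x ∈ supBall d (n + 1) \ supBall d n := by
  obtain ⟨e, he, hfst, hsnd⟩ := p.exists_boundary_dart (supBall d n : Set (Fin d → ℤ)) hu ho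
  exact ⟨e.snd, p.dart_snd_mem_support_of_mem_darts he,
    mem_sdiff.2 ⟨mem_supBall_succ_of_adj hfst e.adj, hsnd⟩⟩

lemma exists_adj_sum_abs_sub_add_one {x y : Fin d → ℤ} (hxy : x ≠ y) :
    ∃ x', (zdGraph d).Adj x x' ∧ ∑ i, |x' i - y i| + 1 = ∑ i, |x i - y i| := by
  obtain ⟨i, hi⟩ := Function.ne_iff.1 hxy
  obtain ⟨c, hxc, hcy⟩ : ∃ c, |x i - c| = 1 ∧ |c - y i| + 1 = |x i - y i| := by
    rcases hi.lt_or_gt with h | h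
    · exact ⟨x i + 1, by simp, by rw [abs_of_nonpos (by omega), abs_of_neg (by omega)]; ring⟩
    · exact ⟨x i - 1, by simp, by rw [abs_of_nonneg (by omega), abs_of_pos (by omega)]; ring⟩
  refine ⟨Function.update x i c, ?_, ?_⟩
  · show ∑ j, |x j - Function.update x i c j| = 1
    simp_rw [Function.apply_update (fun j z => |x j - z|), sum_update_of_mem (mem_univ i)]
    simp [hxc]
  · simp_rw [Function.apply_update (fun j z => |z - y j|), sum_update_of_mem (mem_univ i),
      ← add_sum_erase _ _ (mem_univ i), ← hcy, sdiff_singleton_eq_erase]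
    ring

lemma exists_walk_length_eq_sum_abs_sub (x y : Fin d → ℤ) :
    ∃ p : (zdGraph d).Walk x y, (p.length : ℤ) = ∑ i, |x i - y i| := by
  obtain ⟨N, hN⟩ : ∃ N : ℕ, ∑ i, |x i - y i| = N :=
    Int.eq_ofNat_of_zero_le (sum_nonneg fun _ _ => abs_nonneg _)
  induction N generalizing x with
  | zero =>
    obtain rfl : x = y := funext fun i => by
      have := (sum_eq_zero_iff_of_nonneg fun _ _ => abs_nonneg _).1 hN i (mem_univ i)
      simpa [sub_eq_zero] using this
    exact ⟨.nil, by simp⟩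
  | succ N ih =>
    have hxy : x ≠ y := by rintro rfl; simp at hN; omega
    obtain ⟨x', hadj, hx'⟩ := exists_adj_sum_abs_sub_add_one hxy
    obtain ⟨p, hp⟩ := ih x' (by omega)
    exact ⟨.cons hadj p, by rw [Walk.length_cons]; push_cast; omega⟩

lemma reachable_and_dist_le_sum_abs_sub (x y : Fin d → ℤ) :
    (zdGraph d).Reachable x y ∧ ((zdGraph d).dist x y : ℤ) ≤ ∑ i, |x i - y i| := by
  obtain ⟨p, hp⟩ := exists_walk_length_eq_sum_abs_sub x y
  exact ⟨⟨p⟩, hp ▸ by exact_mod_cast SimpleGraph.dist_le p⟩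

lemma add_const_notMem_supBall_succ (hd : 1 ≤ d) {n : ℕ} {u : Fin d → ℤ}
    (hu : u ∈ supBall d n) : u + (fun _ => (2 * n + 2 : ℤ)) ∉ supBall d (n + 1) := by
  intro h
  have hu0 := abs_le.1 (mem_supBall.1 hu ⟨0, hd⟩)
  have h0 := abs_le.1 (mem_supBall.1 h ⟨0, hd⟩)
  simp only [Pi.add_apply] at h0
  push_cast at h0
  linarith

lemma isUFO_supBall (hd : 1 ≤ d) {m n : ℕ} (hmn : m * d * 3 ^ d ≤ n) (r : ℕ) :
    IsUFO (zdGraph d) m (d * (2 * n + 2)) r (supBall d n)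
      (supBall d (n + 1) \ supBall d n : Finset _)
      ((· + fun _ => (2 * n + 2 : ℤ)) '' supBall d n) := by
  set v : Fin d → ℤ := fun _ => 2 * n + 2
  have hO : ∀ o ∈ (· + v) '' (supBall d n : Set (Fin d → ℤ)), o ∉ supBall d (n + 1) := by
    rintro _ ⟨u, hu, rfl⟩
    exact add_const_notMem_supBall_succ hd hu
  refine ⟨⟨0, mem_supBall.2 fun _ => by simp⟩, finite_toSet _, finite_toSet _,
    (finite_toSet _).image _, ?_, ?_, ?_, ?_,
    ⟨(· + v), (add_left_injective v).injOn.bijOn_image, fun u _ => ?_⟩,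
    fun u hu o ho p hp => ?_⟩
  · exact disjoint_coe.2 disjoint_sdiff
  · exact Set.disjoint_left.2 fun u hu ho => hO u ho (supBall_mono n.le_succ hu)
  · exact Set.disjoint_left.2 fun x hx ho => hO x ho (mem_sdiff.1 hx).1
  · rw [Set.ncard_coe_finset, Set.ncard_coe_finset]
    exact mul_card_supBall_succ_sdiff_le hmn
  · obtain ⟨hreach, hdist⟩ := reachable_and_dist_le_sum_abs_sub u (u + v)
    have hsum : ∑ i, |u i - (u + v) i| = d * (2 * n + 2) := by
      simp only [Pi.add_apply, sub_add_cancel_left, abs_neg, v, sum_const, card_univ,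
        Fintype.card_fin, nsmul_eq_mul]
      rw [abs_of_pos (by positivity)]
    exact ⟨hreach, by exact_mod_cast hsum ▸ hdist⟩
  · obtain ⟨x, hx, hxF⟩ := exists_mem_support_mem_supBall_succ_sdiff hu
      (fun h => hO o ho (supBall_mono n.le_succ h)) p
    exact absurd hxF (hp x hx)

/-- The canonical Cayley graph of `ℤ^d` is extraterrestrial. -/
theorem stmt_1 (d : ℕ) (hd : 1 ≤ d) : Extraterrestrial (zdGraph d) :=
  fun m => ⟨d * (2 * (m * d * 3 ^ d) + 2), fun r => ⟨_, _, _, isUFO_supBall hd le_rfl r⟩⟩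
end

section
/- Every finitely generated infinite amenable group is extraterrestrial. Concretely: if Γ is an infinite group generated by a finite symmetric set S containing the identity, and for every m there is a finite set U ⊆ Γ with |US \ U| ≤ |U|/m, then for every m there exists k such that for every r, the Cayley graph Cay(Γ,S) admits an (m,k,r)-UFO. -/
open SimpleGraph Pointwise

/-- The Cayley graph of a group with respect to a (symmetric) set `S`. -/
def cayleyGraph (Γ : Type*) [Group Γ] (S : Set Γ) : SimpleGraph Γ where
  Adj g h := g ≠ h ∧ (g⁻¹ * h ∈ S ∨ h⁻¹ * g ∈ S)
  symm := ⟨by rintro g h ⟨hne, hs⟩; exact ⟨hne.symm, hs.symm⟩⟩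
  loopless := ⟨by rintro g ⟨hne, _⟩; exact hne rfl⟩

/-!
Take a Følner set `U` with `m |∂U| ≤ |U|`, where `∂U = U S \ U`, and let `F = ∂U`. Every walk
leaving `U` crosses `F`, so if `O = U t` lies outside `U ∪ F` then no walk from `U` to `O`
avoids `F`, whatever `r` is. Since `Γ` is infinite such a `t` exists, and each `u` is joined to
`u t` by the left translate of a shortest walk from `1` to `t`, so `k = dist 1 t` works.
-/

open Set

section UFO

variable {V : Type*} (G : SimpleGraph V)

lemma isUFO_image_of_separates {m k r : ℕ} {U F : Set V} {f : V → V}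
    (hU : U.Nonempty) (hUfin : U.Finite) (hFfin : F.Finite) (hUF : Disjoint U F)
    (hcard : m * F.ncard ≤ U.ncard) (hf : InjOn f U) (hfU : ∀ u ∈ U, f u ∉ U ∪ F)
    (hreach : ∀ u ∈ U, G.Reachable u (f u) ∧ G.dist u (f u) ≤ k)
    (hsep : ∀ u ∈ U, ∀ v ∉ U, ∀ p : G.Walk u v, ∃ x ∈ p.support, x ∈ F) :
    IsUFO G m k r U F (f '' U) := by
  refine ⟨hU, hUfin, hFfin, hUfin.image f, hUF, ?_, ?_, hcard, ⟨f, hf.bijOn_image, hreach⟩, ?_⟩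
  · exact disjoint_right.2 fun _ ⟨u, hu, hfu⟩ h ↦ hfU u hu (hfu ▸ Or.inl h)
  · exact disjoint_right.2 fun _ ⟨u, hu, hfu⟩ h ↦ hfU u hu (hfu ▸ Or.inr h)
  · rintro u hu _ ⟨v, hv, rfl⟩ p hp
    obtain ⟨x, hx, hxF⟩ := hsep u hu (f v) (fun h ↦ hfU v hv (Or.inl h)) p
    exact absurd hxF (hp x hx)

end UFO

section Cayley

variable {Γ : Type*} [Group Γ] (S : Set Γ)

lemma cayleyGraph_adj_mul_left {u g h : Γ} :
    (cayleyGraph Γ S).Adj (u * g) (u * h) ↔ (cayleyGraph Γ S).Adj g h := by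
  simp [cayleyGraph, mul_assoc]

def cayleyGraphMulLeft (u : Γ) : cayleyGraph Γ S →g cayleyGraph Γ S where
  toFun := (u * ·)
  map_rel' := (cayleyGraph_adj_mul_left S).2

lemma cayleyGraph_reachable_mul (hgen : Subgroup.closure S = ⊤) (u t : Γ) :
    (cayleyGraph Γ S).Reachable u (u * t) := by
  induction (hgen ▸ Subgroup.mem_top t : t ∈ Subgroup.closure S) using Subgroup.closure_induction
    generalizing u with
  | mem s hs =>
    by_cases h1 : s = 1
    · simp [h1]
    · exact Adj.reachable ⟨by simpa using h1, Or.inl (by simpa using hs)⟩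
  | one => simp
  | mul x y _ _ ihx ihy => exact (ihx u).trans (mul_assoc u x y ▸ ihy (u * x))
  | inv x _ ihx => simpa using (ihx (u * x⁻¹)).symm

lemma cayleyGraph_dist_mul_le (hgen : Subgroup.closure S = ⊤) (u t : Γ) :
    (cayleyGraph Γ S).dist u (u * t) ≤ (cayleyGraph Γ S).dist 1 t := by
  obtain ⟨p, hp⟩ := (cayleyGraph_reachable_mul S hgen 1 t).exists_walk_length_eq_dist
  simpa [cayleyGraphMulLeft, hp] using dist_le (p.map (cayleyGraphMulLeft S u))

lemma cayleyGraph_walk_exists_mem_mul_diff (hsym : ∀ s ∈ S, s⁻¹ ∈ S) {U : Set Γ} {u v : Γ}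
    (p : (cayleyGraph Γ S).Walk u v) (hu : u ∈ U) (hv : v ∉ U) :
    ∃ x ∈ p.support, x ∈ (U * S) \ U := by
  obtain ⟨d, hd, hfst, hsnd⟩ := p.exists_boundary_dart U hu hv
  refine ⟨d.snd, p.dart_snd_mem_support_of_mem_darts hd, ?_, hsnd⟩
  obtain ⟨-, hs | hs⟩ := d.adj
  · exact ⟨d.fst, hfst, _, hs, mul_inv_cancel_left _ _⟩
  · exact ⟨d.fst, hfst, _, by simpa using hsym _ hs, mul_inv_cancel_left _ _⟩

end Cayley

lemma exists_forall_mul_notMem {Γ : Type*} [Group Γ] [Infinite Γ] {A B : Set Γ} (hA : A.Finite)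
    (hB : B.Finite) : ∃ t : Γ, ∀ a ∈ A, a * t ∉ B := by
  obtain ⟨t, ht⟩ := (hA.inv.mul hB).exists_notMem
  exact ⟨t, fun a ha hat ↦ ht ⟨a⁻¹, inv_mem_inv.2 ha, _, hat, inv_mul_cancel_left a t⟩⟩

theorem stmt_2_general {Γ : Type*} [Group Γ] [Infinite Γ] (S : Finset Γ)
    (hsym : ∀ s ∈ S, s⁻¹ ∈ S)
    (hgen : Subgroup.closure (S : Set Γ) = ⊤)
    (hfolner : ∀ m : ℕ, 0 < m → ∃ U : Finset Γ, U.Nonempty ∧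
      m * (((U : Set Γ) * (S : Set Γ)) \ (U : Set Γ)).ncard ≤ U.card) :
    Extraterrestrial (cayleyGraph Γ (S : Set Γ)) := by
  intro m
  obtain ⟨U, hU, hcard⟩ := hfolner (max m 1) (by positivity)
  have hUS : ((U : Set Γ) * S).Finite := U.finite_toSet.mul S.finite_toSet
  obtain ⟨t, ht⟩ := exists_forall_mul_notMem U.finite_toSet (U.finite_toSet.union hUS)
  refine ⟨(cayleyGraph Γ S).dist 1 t, fun r ↦ ⟨U, ((U : Set Γ) * S) \ U, (· * t) '' U, ?_⟩⟩
  refine isUFO_image_of_separates _ hU U.finite_toSet hUS.sdiff disjoint_sdiff_right ?_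
    (mul_left_injective t).injOn (fun u hu h ↦ ht u hu (h.imp id And.left))
    (fun u _ ↦ ⟨cayleyGraph_reachable_mul _ hgen u t, cayleyGraph_dist_mul_le _ hgen u t⟩)
    fun u hu v hv p ↦ cayleyGraph_walk_exists_mem_mul_diff _ hsym p hu hv
  calc m * _ ≤ max m 1 * _ := Nat.mul_le_mul_right _ (le_max_left m 1)
    _ ≤ U.card := hcard
    _ = _ := (ncard_coe_finset U).symm

/-- Every finitely generated infinite amenable group is extraterrestrial. -/
theorem stmt_2 {Γ : Type*} [Group Γ] [Infinite Γ] (S : Finset Γ)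
    (hsym : ∀ s ∈ S, s⁻¹ ∈ S) (hone : (1 : Γ) ∈ S)
    (hgen : Subgroup.closure (S : Set Γ) = ⊤)
    (hfolner : ∀ m : ℕ, 0 < m → ∃ U : Finset Γ, U.Nonempty ∧
      m * (((U : Set Γ) * (S : Set Γ)) \ (U : Set Γ)).ncard ≤ U.card) :
    Extraterrestrial (cayleyGraph Γ (S : Set Γ)) :=
  stmt_2_general S hsym hgen hfolner
end

section
/- Every finitely generated multi-ended group is extraterrestrial: if Γ is generated by a finite symmetric set S and there is a finite set F ⊆ Γ such that Cay(Γ,S) has at least two infinite connected components after removing F, then Cay(Γ,S) is extraterrestrial. -/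
open SimpleGraph Pointwise

/-- A graph is multi-ended if removing some finite set of vertices leaves at least two
infinite connected components. -/
def MultiEnded {V : Type*} (G : SimpleGraph V) : Prop :=
  ∃ F₀ : Set V, F₀.Finite ∧ ∃ a b : ↥(F₀ᶜ),
    (G.induce F₀ᶜ).connectedComponentMk a ≠ (G.induce F₀ᶜ).connectedComponentMk b ∧
    ((G.induce F₀ᶜ).connectedComponentMk a).supp.Infinite ∧
    ((G.induce F₀ᶜ).connectedComponentMk b).supp.Infinite

/-!
Removing the finite set `F₀` leaves two distinct infinite components `C` and `D`. Take `U ⊆ C`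
and `O ⊆ D` of the same size `m|F₀| + 1` and match them by any bijection: since the graph is
connected, the matching has some finite length `k`, while every walk from `C` to `D` must pass
through `F₀`, so there is no walk from `U` to `O` avoiding `F₀` at all and `(U, F₀, O)` is an
`(m, k, r)`-UFO for every `r`.
-/

section Cayley

variable {Γ : Type*} [Group Γ] {S : Set Γ}

theorem cayleyGraph_reachable_mul_right (hgen : Subgroup.closure S = ⊤) (x g : Γ) :
    (cayleyGraph Γ S).Reachable x (x * g) := by
  have hg : g ∈ Subgroup.closure S := hgen ▸ Subgroup.mem_top g
  induction hg using Subgroup.closure_induction generalizing x with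
  | mem s hs =>
    by_cases hs1 : s = 1
    · simp [hs1]
    · exact Adj.reachable ⟨by simpa using hs1, .inl (by simpa using hs)⟩
  | one => simp
  | mul g h _ _ ihg ihh => simpa [mul_assoc] using (ihg x).trans (ihh (x * g))
  | inv g _ ih => simpa using (ih (x * g⁻¹)).symm

theorem cayleyGraph_preconnected (hgen : Subgroup.closure S = ⊤) :
    (cayleyGraph Γ S).Preconnected := fun a b => by
  simpa using cayleyGraph_reachable_mul_right hgen a (a⁻¹ * b)

end Cayley

theorem SimpleGraph.ConnectedComponent.eq_of_walk_support_subset {V : Type*}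
    {G : SimpleGraph V} {s : Set V} {C D : (G.induce s).ConnectedComponent} {u v : V}
    (hu : u ∈ Subtype.val '' C.supp) (hv : v ∈ Subtype.val '' D.supp) (p : G.Walk u v)
    (hp : ∀ x ∈ p.support, x ∈ s) :
    C = D := by
  obtain ⟨u, hu, rfl⟩ := hu
  obtain ⟨v, hv, rfl⟩ := hv
  rw [← (mem_supp_iff C u).1 hu, ← (mem_supp_iff D v).1 hv]
  exact ConnectedComponent.sound (p.induce s hp).reachable

theorem MultiEnded.extraterrestrial {V : Type*} {G : SimpleGraph V} (hG : G.Preconnected)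
    (hME : MultiEnded G) :
    Extraterrestrial G := by
  obtain ⟨F, hF, a, b, hab, ha, hb⟩ := hME
  have : Nonempty V := ⟨a⟩
  intro m
  obtain ⟨U, hUC, hU, hUcard⟩ :=
    (ha.image Subtype.val_injective.injOn).exists_subset_ncard_eq (m * F.ncard + 1)
  obtain ⟨O, hOD, hO, hOcard⟩ :=
    (hb.image Subtype.val_injective.injOn).exists_subset_ncard_eq (m * F.ncard + 1)
  obtain ⟨f, hf⟩ := hU.exists_bijOn_of_encard_eq (t := O) <| by
    rw [← hU.cast_ncard_eq, ← hO.cast_ncard_eq, hUcard, hOcard]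
  obtain ⟨k, hk⟩ := (hU.image fun u => G.dist u (f u)).bddAbove
  have hUF : U ⊆ Fᶜ := hUC.trans (Subtype.coe_image_subset _ _)
  have hOF : O ⊆ Fᶜ := hOD.trans (Subtype.coe_image_subset _ _)
  have hsep : ∀ u ∈ U, ∀ o ∈ O, ∀ p : G.Walk u o, (∀ x ∈ p.support, x ∉ F) → False :=
    fun u hu o ho p hp => hab <|
      ConnectedComponent.eq_of_walk_support_subset (hUC hu) (hOD ho) p hp
  have hUO : Disjoint U O :=
    Set.disjoint_left.2 fun u hu hu' => hsep u hu u hu' .nil (by simpa using hUF hu)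
  refine ⟨k, fun r => ⟨U, F, O, Set.nonempty_of_ncard_ne_zero (by omega), hU, hF, hO,
    Set.subset_compl_iff_disjoint_right.1 hUF, hUO,
    (Set.subset_compl_iff_disjoint_right.1 hOF).symm, hUcard ▸ Nat.le_succ _,
    ⟨f, hf, fun u hu => ⟨hG u (f u), hk ⟨u, hu, rfl⟩⟩⟩,
    fun u hu o ho p hp => (hsep u hu o ho p hp).elim⟩⟩

theorem stmt_3_general {Γ : Type*} [Group Γ] (S : Finset Γ)
    (hgen : Subgroup.closure (S : Set Γ) = ⊤)
    (hME : MultiEnded (cayleyGraph Γ (S : Set Γ))) :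
    Extraterrestrial (cayleyGraph Γ (S : Set Γ)) :=
  hME.extraterrestrial (cayleyGraph_preconnected hgen)

/-- Every finitely generated multi-ended group is extraterrestrial. -/
theorem stmt_3 {Γ : Type*} [Group Γ] (S : Finset Γ)
    (hsym : ∀ s ∈ S, s⁻¹ ∈ S) (hgen : Subgroup.closure (S : Set Γ) = ⊤)
    (hME : MultiEnded (cayleyGraph Γ (S : Set Γ))) :
    Extraterrestrial (cayleyGraph Γ (S : Set Γ)) :=
  stmt_3_general S hgen hME
end

section
/- Being extraterrestrial is a quasi-isometry invariant for connected graphs of bounded degree: if G and G' are quasi-isometric graphs of bounded degree and G is extraterrestrial, then G' is extraterrestrial. -/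
open SimpleGraph Pointwise

/-!
Transport a UFO `(U, F, O)` of `G`, with matching `g`, along the quasi-isometry `f`. Balls of
radius `t` in a graph of degree at most `D` have at most `(D + 1) ^ t` vertices, so `f` has
uniformly bounded fibres and a bounded thickening of `F` is only boundedly larger than `F`.
Hence `U` can be thinned out, at the cost of a bounded factor, to a set `S` on which `f` and
`f ∘ g` are injective and such that `S` and `g(S)` stay far from `F`. Then `f(S)`, a thickening
`F'` of `f(F)` and `f(g(S))` form a UFO of `G'`: a path of `G'` avoiding `F'` lifts, through
coarse preimages of its vertices, to a path of `G` avoiding `F` that is at most a constant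
factor longer, so it is long.
-/

namespace Set

variable {α β γ : Type*}

lemma Finite.ncard_le_mul_ncard_image {S : Set α} (hS : S.Finite) (h : α → β) {n : ℕ}
    (hn : ∀ y, {x ∈ S | h x = y}.ncard ≤ n) : S.ncard ≤ n * (h '' S).ncard := by
  classical
  lift S to Finset α using hS
  simpa [← Finset.coe_image] using
    Finset.card_le_mul_card_image S n fun y _ => by simpa [← Finset.coe_filter] using hn y

lemma Finite.exists_subset_injOn_ncard_le {S : Set α} (hS : S.Finite) (h : α → β) {n : ℕ}
    (hn : ∀ y, {x ∈ S | h x = y}.ncard ≤ n) :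
    ∃ T ⊆ S, InjOn h T ∧ S.ncard ≤ n * T.ncard := by
  obtain ⟨T, hTS, hT, himage⟩ := (surjOn_image h S).exists_subset_injOn_image_eq
  refine ⟨T, hTS, hT, ?_⟩
  rw [← hT.ncard_image, himage]
  exact hS.ncard_le_mul_ncard_image h hn

lemma ncard_le_ncard_sep_add {U N : Set α} (hU : U.Finite) (hN : N.Finite) {g : α → α}
    (hg : InjOn g U) : U.ncard ≤ {u ∈ U | u ∉ N ∧ g u ∉ N}.ncard + 2 * N.ncard := by
  have hcover : U ⊆ {u ∈ U | u ∉ N ∧ g u ∉ N} ∪ (U ∩ N) ∪ (U ∩ g ⁻¹' N) := by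
    intro u hu
    by_cases h₁ : u ∈ N <;> by_cases h₂ : g u ∈ N <;> simp [hu, h₁, h₂]
  have h₁ : (U ∩ N).ncard ≤ N.ncard := ncard_le_ncard inter_subset_right hN
  have h₂ : (U ∩ g ⁻¹' N).ncard ≤ N.ncard :=
    ncard_le_ncard_of_injOn g (fun u hu => hu.2) (hg.mono inter_subset_left) hN
  have hfin : ({u ∈ U | u ∉ N ∧ g u ∉ N} ∪ (U ∩ N) ∪ (U ∩ g ⁻¹' N)).Finite :=
    hU.subset (union_subset (union_subset (sep_subset _ _) inter_subset_left) inter_subset_left)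
  grw [ncard_le_ncard hcover hfin, ncard_union_le, ncard_union_le]
  omega

lemma InjOn.exists_bijOn_image [Nonempty α] {f : α → β} {h : α → γ} {S : Set α}
    (hf : InjOn f S) (hh : InjOn h S) :
    ∃ φ : β → γ, BijOn φ (f '' S) (h '' S) ∧ ∀ u ∈ S, φ (f u) = h u :=
  ⟨h ∘ Function.invFunOn f S,
    hh.bijOn_image.comp (.symm hf.bijOn_image.invOn_invFunOn.symm hf.bijOn_image),
    fun _ hu => congrArg h (hf.leftInvOn_invFunOn hu)⟩

end Set

namespace SimpleGraph

variable {V V' : Type*} {G : SimpleGraph V} {G' : SimpleGraph V'}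

-- Only meaningful for connected `G`, as `G.dist` vanishes between components.
variable (G) in
def cthickening (t : ℕ) (F : Set V) : Set V := {y | ∃ x ∈ F, G.dist x y ≤ t}

lemma Connected.cthickening_zero (hG : G.Connected) (F : Set V) : G.cthickening 0 F = F := by
  ext y
  simp [cthickening, hG.dist_eq_zero_iff]

lemma Connected.cthickening_succ_subset (hG : G.Connected) (t : ℕ) (F : Set V) :
    G.cthickening (t + 1) F ⊆ G.cthickening 1 (G.cthickening t F) := by
  rintro y ⟨x, hx, hxy⟩
  obtain ⟨p, hp⟩ := hG.exists_walk_length_eq_dist x y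
  refine ⟨p.getVert t, ⟨x, hx, (dist_le (p.take t)).trans (by simp)⟩, ?_⟩
  exact (dist_le (p.drop t)).trans (by simp; omega)

lemma Connected.encard_cthickening_one_le (hG : G.Connected) {D : ℕ}
    (hfin : ∀ v, (G.neighborSet v).Finite) (hdeg : ∀ v, (G.neighborSet v).ncard ≤ D)
    (S : Set V) : (G.cthickening 1 S).encard ≤ S.encard * (D + 1) := by
  obtain hS | hS := S.finite_or_infinite
  swap
  · simp [hS.encard_eq]
  lift S to Finset V using hS
  have hsub : G.cthickening 1 S ⊆ ⋃ x ∈ S, insert x (G.neighborSet x) := by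
    rintro y ⟨x, hx, hxy⟩
    refine Set.mem_biUnion hx ?_
    obtain h | h := Nat.le_one_iff_eq_zero_or_eq_one.mp hxy
    · exact .inl (hG.dist_eq_zero_iff.mp h).symm
    · exact .inr (dist_eq_one_iff_adj.mp h)
  have hnbhd (x : V) : (insert x (G.neighborSet x)).encard ≤ D + 1 := by
    grw [Set.encard_insert_le, ← (hfin x).cast_ncard_eq, hdeg x]
  calc (G.cthickening 1 S).encard ≤ ∑ x ∈ S, (insert x (G.neighborSet x)).encard :=
        (Set.encard_le_encard hsub).trans (S.set_encard_biUnion_le _)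
    _ ≤ ∑ _x ∈ S, ((D : ℕ∞) + 1) := Finset.sum_le_sum fun x _ => hnbhd x
    _ = _ := by simp; ring

lemma Connected.encard_cthickening_le (hG : G.Connected) {D : ℕ}
    (hfin : ∀ v, (G.neighborSet v).Finite) (hdeg : ∀ v, (G.neighborSet v).ncard ≤ D)
    (t : ℕ) (F : Set V) : (G.cthickening t F).encard ≤ F.encard * (D + 1) ^ t := by
  induction t with
  | zero => simp [hG.cthickening_zero]
  | succ t ih =>
    calc (G.cthickening (t + 1) F).encard
        ≤ (G.cthickening 1 (G.cthickening t F)).encard :=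
          Set.encard_le_encard (hG.cthickening_succ_subset t F)
      _ ≤ (G.cthickening t F).encard * (D + 1) := hG.encard_cthickening_one_le hfin hdeg _
      _ ≤ F.encard * (D + 1) ^ (t + 1) := by grw [ih, pow_succ, mul_assoc]

lemma Connected.finite_cthickening_and_ncard_le (hG : G.Connected) {D : ℕ}
    (hfin : ∀ v, (G.neighborSet v).Finite) (hdeg : ∀ v, (G.neighborSet v).ncard ≤ D)
    (t : ℕ) {F : Set V} (hF : F.Finite) :
    (G.cthickening t F).Finite ∧ (G.cthickening t F).ncard ≤ F.ncard * (D + 1) ^ t := by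
  rw [← Set.encard_le_coe_iff_finite_ncard_le]
  grw [hG.encard_cthickening_le hfin hdeg, ← hF.cast_ncard_eq]
  norm_cast

structure IsQuasiIsometry (G : SimpleGraph V) (G' : SimpleGraph V') (f : V → V') (a b c : ℕ) :
    Prop where
  dist_map_le : ∀ u v, G'.dist (f u) (f v) ≤ a * G.dist u v + b
  dist_le_dist_map : ∀ u v, G.dist u v ≤ a * (G'.dist (f u) (f v) + b)
  exists_dist_map_le : ∀ y, ∃ x, G'.dist y (f x) ≤ c

lemma isQuasiIsometry_ceil {f : V → V'} {A B C : ℝ} (hA : 0 < A)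
    (hqi : ∀ u v : V, (1 / A) * (G.dist u v : ℝ) - B ≤ (G'.dist (f u) (f v) : ℝ) ∧
      (G'.dist (f u) (f v) : ℝ) ≤ A * (G.dist u v : ℝ) + B)
    (hdense : ∀ y : V', ∃ x : V, (G'.dist y (f x) : ℝ) ≤ C) :
    IsQuasiIsometry G G' f ⌈A⌉₊ ⌈B⌉₊ ⌈C⌉₊ := by
  have hA' : A ≤ ⌈A⌉₊ := Nat.le_ceil A
  have hB' : B ≤ ⌈B⌉₊ := Nat.le_ceil B
  refine ⟨fun u v => ?_, fun u v => ?_, fun y => ?_⟩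
  · have : (G'.dist (f u) (f v) : ℝ) ≤ ⌈A⌉₊ * G.dist u v + ⌈B⌉₊ := by
      grw [(hqi u v).2, hA', hB']
    exact_mod_cast this
  · have h := (hqi u v).1
    have : (G.dist u v : ℝ) ≤ ⌈A⌉₊ * (G'.dist (f u) (f v) + ⌈B⌉₊) := by
      calc (G.dist u v : ℝ) = A * ((1 / A) * G.dist u v) := by field_simp
        _ ≤ A * (G'.dist (f u) (f v) + ⌈B⌉₊) := by gcongr; linarith
        _ ≤ ⌈A⌉₊ * (G'.dist (f u) (f v) + ⌈B⌉₊) := by gcongr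
    exact_mod_cast this
  · obtain ⟨x, hx⟩ := hdense y
    exact ⟨x, by exact_mod_cast hx.trans (Nat.le_ceil C)⟩

namespace IsQuasiIsometry

variable {f : V → V'} {a b c : ℕ}

lemma mem_cthickening_of_map_mem (hf : IsQuasiIsometry G G' f a b c) {t : ℕ} {F : Set V}
    {u : V} (hu : f u ∈ G'.cthickening t (f '' F)) : u ∈ G.cthickening (a * (t + b)) F := by
  obtain ⟨_, ⟨x, hx, rfl⟩, hxu⟩ := hu
  exact ⟨x, hx, (hf.dist_le_dist_map x u).trans (by gcongr)⟩

lemma encard_le_of_injOn_of_map_eq (hf : IsQuasiIsometry G G' f a b c) (hG : G.Connected)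
    {D : ℕ} (hfin : ∀ v, (G.neighborSet v).Finite) (hdeg : ∀ v, (G.neighborSet v).ncard ≤ D)
    {S : Set V} {h : V → V} (hh : Set.InjOn h S) {y : V'} (hy : ∀ x ∈ S, f (h x) = y) :
    S.encard ≤ (D + 1) ^ (a * b) := by
  obtain rfl | ⟨x₀, hx₀⟩ := S.eq_empty_or_nonempty
  · simp
  have hball : h '' S ⊆ G.cthickening (a * b) {h x₀} := by
    rintro _ ⟨x, hx, rfl⟩
    refine ⟨h x₀, rfl, (hf.dist_le_dist_map _ _).trans ?_⟩
    simp [hy x hx, hy x₀ hx₀]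
  calc S.encard = (h '' S).encard := hh.encard_image.symm
    _ ≤ _ := (Set.encard_le_encard hball).trans (hG.encard_cthickening_le hfin hdeg _ _)
    _ = (D + 1) ^ (a * b) := by simp

lemma exists_walk_near (hf : IsQuasiIsometry G G' f a b c) (hG : G.Connected)
    (hG' : G'.Connected) {s : ℕ} {x₀ x₁ : V} (hx : G.dist x₀ x₁ ≤ s) {y : V'}
    (hy : G'.dist y (f x₀) ≤ c) :
    ∃ q : G.Walk x₀ x₁, q.length ≤ s ∧ ∀ x ∈ q.support, G'.dist (f x) y ≤ a * s + b + c := by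
  classical
  obtain ⟨q, hq⟩ := hG.exists_walk_length_eq_dist x₀ x₁
  refine ⟨q, hq ▸ hx, fun x hx' => ?_⟩
  have hx₀x : G.dist x₀ x ≤ s :=
    ((dist_le (q.takeUntil x hx')).trans (q.length_takeUntil_le_length hx')).trans (hq ▸ hx)
  calc G'.dist (f x) y ≤ G'.dist (f x) (f x₀) + G'.dist (f x₀) y := hG'.dist_triangle
    _ ≤ a * s + b + c := by
      grw [hf.dist_map_le, dist_comm (u := x), hx₀x, dist_comm, hy]

lemma exists_walk_lift (hf : IsQuasiIsometry G G' f a b c) (hG : G.Connected)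
    (hG' : G'.Connected) {s : ℕ} (hs : a * (2 * c + 1 + b) ≤ s) {y z : V'} (p : G'.Walk y z)
    {x₀ x₁ : V} (hx₀ : G'.dist y (f x₀) ≤ c) (hx₁ : G'.dist z (f x₁) ≤ c) :
    ∃ q : G.Walk x₀ x₁, q.length ≤ s * (p.length + 1) ∧
      ∀ x ∈ q.support, ∃ y' ∈ p.support, G'.dist (f x) y' ≤ a * s + b + c := by
  induction p generalizing x₀ with
  | @nil y =>
    have hd : G.dist x₀ x₁ ≤ s := by
      grw [hf.dist_le_dist_map, hG'.dist_triangle (v := y), dist_comm, hx₀, hx₁, ← hs]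
      exact Nat.mul_le_mul_left _ (by omega)
    obtain ⟨q, hq, hnear⟩ := hf.exists_walk_near hG hG' hd hx₀
    exact ⟨q, by simpa using hq, fun x hx => ⟨y, by simp, hnear x hx⟩⟩
  | @cons y y' z hadj p ih =>
    obtain ⟨x', hx'⟩ := hf.exists_dist_map_le y'
    obtain ⟨q', hq', hnear'⟩ := ih hx' hx₁
    have hd : G.dist x₀ x' ≤ s := by
      grw [hf.dist_le_dist_map, hG'.dist_triangle (v := y),
        hG'.dist_triangle (u := y) (v := y'), dist_comm, hx₀, dist_eq_one_iff_adj.mpr hadj, hx',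
        ← hs]
      exact Nat.mul_le_mul_left _ (by omega)
    obtain ⟨q, hq, hnear⟩ := hf.exists_walk_near hG hG' hd hx₀
    refine ⟨q.append q', ?_, fun x hx => ?_⟩
    · rw [Walk.length_append, Walk.length_cons]
      grw [hq, hq']
      exact (by ring : s + s * (p.length + 1) = s * (p.length + 1 + 1)).le
    · rcases (Walk.mem_support_append_iff _ _).mp hx with hx | hx
      · exact ⟨y, by simp, hnear x hx⟩
      · obtain ⟨y'', hy'', h⟩ := hnear' x hx
        exact ⟨y'', by simp [hy''], h⟩

lemma le_mul_length_of_avoid (hf : IsQuasiIsometry G G' f a b c) (hG : G.Connected)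
    (hG' : G'.Connected) {s r : ℕ} (hs : a * (2 * c + 1 + b) ≤ s) {U F O : Set V}
    (hsep : ∀ u ∈ U, ∀ o ∈ O, ∀ q : G.Walk u o, (∀ x ∈ q.support, x ∉ F) → r ≤ q.length)
    {u o : V} (hu : u ∈ U) (ho : o ∈ O) (p : G'.Walk (f u) (f o))
    (hp : ∀ y ∈ p.support, y ∉ G'.cthickening (a * s + b + c) (f '' F)) :
    r ≤ s * (p.length + 1) := by
  obtain ⟨q, hq, hnear⟩ :=
    hf.exists_walk_lift hG hG' hs p (x₀ := u) (x₁ := o) (by simp) (by simp)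
  refine (hsep u hu o ho q fun x hx hxF => ?_).trans hq
  obtain ⟨y, hy, hxy⟩ := hnear x hx
  exact hp y hy ⟨f x, Set.mem_image_of_mem f hxF, hxy⟩

lemma exists_subset_far_injOn (hf : IsQuasiIsometry G G' f a b c) (hG : G.Connected) {D : ℕ}
    (hfin : ∀ v, (G.neighborSet v).Finite) (hdeg : ∀ v, (G.neighborSet v).ncard ≤ D)
    {U F : Set V} (hU : U.Finite) (hF : F.Finite) {g : V → V} (hg : Set.InjOn g U) (t : ℕ) :
    ∃ S ⊆ U, (∀ u ∈ S, u ∉ G.cthickening t F ∧ g u ∉ G.cthickening t F) ∧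
      Set.InjOn f S ∧ Set.InjOn (f ∘ g) S ∧
      U.ncard ≤ ((D + 1) ^ (a * b)) ^ 2 * S.ncard + 2 * (F.ncard * (D + 1) ^ t) := by
  have hfiber {S : Set V} {h : V → V} (hh : Set.InjOn h S) (y : V') :
      {x ∈ S | f (h x) = y}.ncard ≤ (D + 1) ^ (a * b) := by
    refine (Set.encard_le_coe_iff_finite_ncard_le.mp ?_).2
    exact_mod_cast hf.encard_le_of_injOn_of_map_eq hG hfin hdeg (hh.mono (Set.sep_subset _ _))
      fun x hx => hx.2
  obtain ⟨hNfin, hN⟩ := hG.finite_cthickening_and_ncard_le hfin hdeg t hF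
  set S₁ := {u ∈ U | u ∉ G.cthickening t F ∧ g u ∉ G.cthickening t F}
  have hS₁ : S₁.Finite := hU.subset (Set.sep_subset _ _)
  obtain ⟨S₂, hS₂, hfS₂, hcard₂⟩ :=
    hS₁.exists_subset_injOn_ncard_le f (hfiber (Set.injOn_id _))
  obtain ⟨S, hS, hfgS, hcard⟩ := (hS₁.subset hS₂).exists_subset_injOn_ncard_le (f ∘ g)
    (hfiber (hg.mono (hS₂.trans (Set.sep_subset _ _))))
  refine ⟨S, (hS.trans hS₂).trans (Set.sep_subset _ _), fun u hu => (hS₂ (hS hu)).2,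
    hfS₂.mono hS, hfgS, ?_⟩
  calc U.ncard ≤ S₁.ncard + 2 * (G.cthickening t F).ncard :=
        Set.ncard_le_ncard_sep_add hU hNfin hg
    _ ≤ ((D + 1) ^ (a * b)) ^ 2 * S.ncard + 2 * (F.ncard * (D + 1) ^ t) := by
      grw [hcard₂, hcard, hN, sq, mul_assoc]

lemma isUFO_image (hf : IsQuasiIsometry G G' f a b c) (hG : G.Connected) (hG' : G'.Connected)
    {D' : ℕ} (hfin' : ∀ v, (G'.neighborSet v).Finite)
    (hdeg' : ∀ v, (G'.neighborSet v).ncard ≤ D') {s k r m' r' : ℕ}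
    (hs : a * (2 * c + 1 + b) ≤ s) (hr : s * (r' + 1) < r) {U F O S : Set V} {g : V → V}
    (hF : F.Finite) (hSU : S ⊆ U) (hS : S.Finite) (hgO : Set.MapsTo g U O)
    (hgk : ∀ u ∈ U, G.dist u (g u) ≤ k)
    (hsep : ∀ u ∈ U, ∀ o ∈ O, ∀ q : G.Walk u o, (∀ x ∈ q.support, x ∉ F) → r ≤ q.length)
    (hfar : ∀ u ∈ S, u ∉ G.cthickening (a * (a * s + b + c + b)) F ∧
      g u ∉ G.cthickening (a * (a * s + b + c + b)) F)
    (hfS : Set.InjOn f S) (hfgS : Set.InjOn (f ∘ g) S)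
    (hcard : m' * (F.ncard * (D' + 1) ^ (a * s + b + c)) < S.ncard) :
    IsUFO G' m' (a * k + b) r' (f '' S) (G'.cthickening (a * s + b + c) (f '' F))
      ((f ∘ g) '' S) := by
  set F' := G'.cthickening (a * s + b + c) (f '' F)
  obtain ⟨u₀, hu₀⟩ : S.Nonempty := Set.nonempty_of_ncard_ne_zero (by omega)
  have : Nonempty V := ⟨u₀⟩
  have hnotF' {u : V} (hu : u ∈ S) : f u ∉ F' :=
    fun h => (hfar u hu).1 (hf.mem_cthickening_of_map_mem h)
  have hlong {u o : V} (hu : u ∈ S) (ho : o ∈ S) (p : G'.Walk (f u) (f (g o)))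
      (hp : ∀ y ∈ p.support, y ∉ F') : r' < p.length := by
    have := hf.le_mul_length_of_avoid hG hG' hs hsep (hSU hu) (hgO (hSU ho)) p hp
    have := Nat.lt_of_mul_lt_mul_left (hr.trans_le this)
    omega
  obtain ⟨hF'fin, hF'card⟩ := hG'.finite_cthickening_and_ncard_le hfin' hdeg'
    (a * s + b + c) (hF.image f)
  obtain ⟨φ, hφ, hφf⟩ := hfS.exists_bijOn_image hfgS
  refine ⟨⟨f u₀, u₀, hu₀, rfl⟩, hS.image f, hF'fin, hS.image _, ?_, ?_, ?_, ?_,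
    ⟨φ, hφ, ?_⟩, ?_⟩
  · rw [Set.disjoint_left]
    rintro _ ⟨u, hu, rfl⟩
    exact hnotF' hu
  · -- `f u = f (g o)` would give a walk of length `0` avoiding `F'`.
    rw [Set.disjoint_left]
    rintro _ ⟨u, hu, rfl⟩ ⟨o, ho, hou⟩
    have := hlong hu ho (Walk.nil.copy rfl hou.symm) (by simpa using hnotF' hu)
    simp at this
  · rw [Set.disjoint_right]
    rintro _ ⟨u, hu, rfl⟩ h
    exact (hfar u hu).2 (hf.mem_cthickening_of_map_mem h)
  · grw [hfS.ncard_image, hF'card, Set.ncard_image_le hF]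
    exact hcard.le
  · rintro _ ⟨u, hu, rfl⟩
    refine ⟨hG'.preconnected _ _, ?_⟩
    rw [hφf u hu]
    exact (hf.dist_map_le _ _).trans (by grw [hgk u (hSU hu)])
  · rintro _ ⟨u, hu, rfl⟩ _ ⟨o, ho, rfl⟩ p hp
    exact (hlong hu ho p hp).le

end IsQuasiIsometry

end SimpleGraph

theorem Extraterrestrial.of_isQuasiIsometry {V V' : Type*} {G : SimpleGraph V}
    {G' : SimpleGraph V'} (hET : Extraterrestrial G) {f : V → V'} {a b c : ℕ}
    (hf : IsQuasiIsometry G G' f a b c) (hG : G.Connected) (hG' : G'.Connected) {D D' : ℕ}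
    (hfin : ∀ v, (G.neighborSet v).Finite) (hdeg : ∀ v, (G.neighborSet v).ncard ≤ D)
    (hfin' : ∀ v, (G'.neighborSet v).Finite) (hdeg' : ∀ v, (G'.neighborSet v).ncard ≤ D') :
    Extraterrestrial G' := by
  intro m'
  set s := a * (2 * c + 1 + b)
  set ρ := a * s + b + c
  set M := (D + 1) ^ (a * b)
  set N := (D + 1) ^ (a * (ρ + b))
  -- Thinning `U` out costs a factor `M ^ 2` and `2 * N` points per point of `F`.
  obtain ⟨k, hk⟩ := hET (m' * (D' + 1) ^ ρ * M ^ 2 + 2 * N + 1)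
  refine ⟨a * k + b, fun r' => ?_⟩
  obtain ⟨U, F, O, hUne, hU, hF, -, -, -, -, hUF, ⟨g, hg, hgk⟩, hsep⟩ :=
    hk (s * (r' + 1) + 1)
  obtain ⟨S, hSU, hfar, hfS, hfgS, hUS⟩ :=
    hf.exists_subset_far_injOn hG hfin hdeg hU hF hg.injOn (a * (ρ + b))
  change U.ncard ≤ M ^ 2 * S.ncard + 2 * (F.ncard * N) at hUS
  have hU₀ : U.ncard ≠ 0 := Set.ncard_ne_zero_of_mem hUne.some_mem hU
  have hcard : m' * (F.ncard * (D' + 1) ^ ρ) < S.ncard := by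
    refine Nat.lt_of_mul_lt_mul_left (a := M ^ 2) ?_
    rcases Nat.eq_zero_or_pos F.ncard with hF₀ | hF₀
    · simp only [hF₀, zero_mul, mul_zero] at hUS ⊢
      omega
    · have : (m' * (D' + 1) ^ ρ * M ^ 2 + 2 * N + 1) * F.ncard =
          M ^ 2 * (m' * (F.ncard * (D' + 1) ^ ρ)) + 2 * (F.ncard * N) + F.ncard := by ring
      omega
  exact ⟨_, _, _, hf.isUFO_image hG hG' hfin' hdeg' le_rfl (Nat.lt_succ_self _) hF hSU
    (hU.subset hSU) hg.mapsTo (fun u hu => (hgk u hu).2) hsep hfar hfS hfgS hcard⟩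

theorem stmt_4_general {V V' : Type*} (G : SimpleGraph V) (G' : SimpleGraph V')
    (hconn : G.Connected) (hconn' : G'.Connected)
    (D D' : ℕ)
    (hfin : ∀ v : V, (G.neighborSet v).Finite) (hdeg : ∀ v : V, (G.neighborSet v).ncard ≤ D)
    (hfin' : ∀ v : V', (G'.neighborSet v).Finite)
    (hdeg' : ∀ v : V', (G'.neighborSet v).ncard ≤ D')
    (f : V → V') (A B C : ℝ) (hA : 0 < A)
    (hqi : ∀ v₁ v₂ : V,
      (1 / A) * (G.dist v₁ v₂ : ℝ) - B ≤ (G'.dist (f v₁) (f v₂) : ℝ) ∧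
      (G'.dist (f v₁) (f v₂) : ℝ) ≤ A * (G.dist v₁ v₂ : ℝ) + B)
    (hdense : ∀ v' : V', ∃ v : V, (G'.dist v' (f v) : ℝ) ≤ C)
    (hET : Extraterrestrial G) : Extraterrestrial G' :=
  hET.of_isQuasiIsometry (isQuasiIsometry_ceil hA hqi hdense) hconn hconn' hfin hdeg hfin' hdeg'

/-- Being extraterrestrial is a quasi-isometry invariant for connected graphs of
bounded degree. -/
theorem stmt_4 {V V' : Type*} (G : SimpleGraph V) (G' : SimpleGraph V')
    (hconn : G.Connected) (hconn' : G'.Connected)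
    (D D' : ℕ)
    (hfin : ∀ v : V, (G.neighborSet v).Finite) (hdeg : ∀ v : V, (G.neighborSet v).ncard ≤ D)
    (hfin' : ∀ v : V', (G'.neighborSet v).Finite)
    (hdeg' : ∀ v : V', (G'.neighborSet v).ncard ≤ D')
    (f : V → V') (A B C : ℝ) (hA : 0 < A) (hB : 0 < B) (hC : 0 < C)
    (hqi : ∀ v₁ v₂ : V,
      (1 / A) * (G.dist v₁ v₂ : ℝ) - B ≤ (G'.dist (f v₁) (f v₂) : ℝ) ∧
      (G'.dist (f v₁) (f v₂) : ℝ) ≤ A * (G.dist v₁ v₂ : ℝ) + B)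
    (hdense : ∀ v' : V', ∃ v : V, (G'.dist v' (f v) : ℝ) ≤ C)
    (hET : Extraterrestrial G) : Extraterrestrial G' :=
  stmt_4_general G G' hconn hconn' D D' hfin hdeg hfin' hdeg' f A B C hA hqi hdense hET
end

section
/- Let Γ be an infinite group with finite symmetric generating set S, let s ∈ Γ \ {1} with |s|_S = k, and let C ≥ 1. If |B_{3Ck}| ≥ 3C|B_k| (where B_n is the ball of radius n in the word metric), then any maximal (for inclusion) subset T of B_{3Ck} satisfying T ∩ sT = ∅ has |T| ≥ C|B_k|. -/
/-- The ball of radius `n` in the word metric on a group with generating set `S`. -/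
def wordBall {Γ : Type*} [Group Γ] (S : Set Γ) (n : ℕ) : Set Γ :=
  {g | ∃ w : List Γ, (∀ x ∈ w, x ∈ S) ∧ w.length ≤ n ∧ w.prod = g}

/-!
Maximality forces every `g ∈ B_{3Ck} \ T` to be an `s`- or `s⁻¹`-translate of an element of `T`:
otherwise `T ∪ {g}` would still be disjoint from its `s`-translate. Hence
`B_{3Ck} ⊆ T ∪ sT ∪ s⁻¹T`, so `3C|B_k| ≤ |B_{3Ck}| ≤ 3|T|`.
-/

namespace Set

variable {G : Type*} [Group G] {s g : G} {T B : Set G}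

lemma mem_image_mul_of_not_disjoint_insert (hs : s ≠ 1) (hdisj : Disjoint T ((s * ·) '' T))
    (h : ¬ Disjoint (insert g T) ((s * ·) '' insert g T)) :
    g ∈ (s * ·) '' T ∪ (s⁻¹ * ·) '' T := by
  obtain ⟨x, hx, y, hy, rfl⟩ := not_disjoint_iff.mp h
  rcases hx with hxg | hxT <;> rcases hy with rfl | hyT
  · exact absurd (mul_eq_right.mp hxg) hs
  · exact .inl ⟨y, hyT, hxg⟩
  · exact .inr ⟨s * y, hxT, by simp⟩
  · exact absurd hdisj (not_disjoint_iff.mpr ⟨_, hxT, y, hyT, rfl⟩)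

lemma subset_union_image_mul_of_maximal (hs : s ≠ 1)
    (hT : Maximal (fun U ↦ U ⊆ B ∧ Disjoint U ((s * ·) '' U)) T) :
    B ⊆ T ∪ (s * ·) '' T ∪ (s⁻¹ * ·) '' T := by
  intro g hgB
  by_cases hgT : g ∈ T
  · exact .inl (.inl hgT)
  have hnd : ¬ Disjoint (insert g T) ((s * ·) '' insert g T) := fun h ↦
    hgT (hT.2 ⟨insert_subset hgB hT.1.1, h⟩ (subset_insert g T) (mem_insert g T))
  rw [union_assoc]
  exact .inr (mem_image_mul_of_not_disjoint_insert hs hT.1.2 hnd)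

lemma ncard_le_three_mul_of_subset_union_image_mul (hTB : T ⊆ B)
    (hB : B ⊆ T ∪ (s * ·) '' T ∪ (s⁻¹ * ·) '' T) : B.ncard ≤ 3 * T.ncard := by
  rcases T.finite_or_infinite with hTfin | hTinf
  · calc B.ncard ≤ (T ∪ (s * ·) '' T ∪ (s⁻¹ * ·) '' T).ncard :=
          ncard_le_ncard hB ((hTfin.union (hTfin.image _)).union (hTfin.image _))
      _ ≤ T.ncard + ((s * ·) '' T).ncard + ((s⁻¹ * ·) '' T).ncard :=
          (ncard_union_le _ _).trans (Nat.add_le_add_right (ncard_union_le _ _) _)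
      _ = 3 * T.ncard := by
          rw [ncard_image_of_injective T (mul_right_injective s),
            ncard_image_of_injective T (mul_right_injective s⁻¹)]
          ring
  · simp [(hTinf.mono hTB).ncard]

end Set

theorem stmt_6_general {Γ : Type*} [Group Γ] (S : Finset Γ)
    (s : Γ) (hs : s ≠ 1) (k C : ℕ)
    (hball : 3 * C * (wordBall (S : Set Γ) k).ncard ≤ (wordBall (S : Set Γ) (3 * C * k)).ncard)
    (T : Set Γ) (hT : T ⊆ wordBall (S : Set Γ) (3 * C * k))
    (hdisj : Disjoint T ((s * ·) '' T))
    (hmax : ∀ T' : Set Γ, T ⊆ T' → T' ⊆ wordBall (S : Set Γ) (3 * C * k) →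
      Disjoint T' ((s * ·) '' T') → T' = T) :
    C * (wordBall (S : Set Γ) k).ncard ≤ T.ncard := by
  have hTmax : Maximal (fun U ↦ U ⊆ wordBall (S : Set Γ) (3 * C * k) ∧
      Disjoint U ((s * ·) '' U)) T :=
    ⟨⟨hT, hdisj⟩, fun U hU hTU ↦ (hmax U hTU hU.1 hU.2).le⟩
  have hcard := Set.ncard_le_three_mul_of_subset_union_image_mul hT
    (Set.subset_union_image_mul_of_maximal hs hTmax)
  linarith

/-- If `Γ` is infinite with finite symmetric generating set `S`, `s ≠ 1` has word length `k`,
`C ≥ 1` and `|B_{3Ck}| ≥ 3C|B_k|`, then any maximal subset `T ⊆ B_{3Ck}` with `T ∩ sT = ∅`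
satisfies `|T| ≥ C|B_k|`. -/
theorem stmt_6 {Γ : Type*} [Group Γ] [Infinite Γ] (S : Finset Γ)
    (hsym : ∀ s ∈ S, s⁻¹ ∈ S) (hgen : Subgroup.closure (S : Set Γ) = ⊤)
    (s : Γ) (hs : s ≠ 1) (k C : ℕ) (hC : 1 ≤ C)
    (hsk : s ∈ wordBall (S : Set Γ) k) (hsk' : s ∉ wordBall (S : Set Γ) (k - 1))
    (hball : 3 * C * (wordBall (S : Set Γ) k).ncard ≤ (wordBall (S : Set Γ) (3 * C * k)).ncard)
    (T : Set Γ) (hT : T ⊆ wordBall (S : Set Γ) (3 * C * k))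
    (hdisj : Disjoint T ((s * ·) '' T))
    (hmax : ∀ T' : Set Γ, T ⊆ T' → T' ⊆ wordBall (S : Set Γ) (3 * C * k) →
      Disjoint T' ((s * ·) '' T') → T' = T) :
    C * (wordBall (S : Set Γ) k).ncard ≤ T.ncard :=
  stmt_6_general S s hs k C hball T hT hdisj hmax
end

section
/- For an infinite group Γ with finite symmetric generating set S and any element s ≠ 1 with |s|_S ≤ k, and any finite subset T of the ball B_{Ak} (A a constant) with T ∩ sT = ∅: if T is maximal for inclusion with this property and 3|T| < |B_{Ak}|, then a contradiction arises; hence 3|T| ≥ |B_{Ak}|. -/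
section MaximalDisjointTranslate

variable {G : Type*} [Group G]

theorem subset_union_mul_image_of_maximal_disjoint {s : G} (hs : s ≠ 1) {B T : Set G}
    (hdisj : Disjoint T ((s * ·) '' T))
    (hmax : ∀ g ∈ B, g ∉ T → ¬ Disjoint (insert g T) ((s * ·) '' insert g T)) :
    B ⊆ T ∪ (s * ·) '' T ∪ (s⁻¹ * ·) '' T := by
  intro g hg
  by_cases hgT : g ∈ T
  · exact Or.inl (Or.inl hgT)
  obtain ⟨x, hx, y, hy, hxy⟩ := Set.not_disjoint_iff.mp (hmax g hg hgT)
  rcases hx with rfl | hxT <;> rcases hy with rfl | hyT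
  · exact absurd (mul_eq_right.mp hxy) hs
  · exact Or.inl (Or.inr ⟨y, hyT, hxy⟩)
  · exact Or.inr ⟨x, hxT, by rw [← hxy]; exact inv_mul_cancel_left s y⟩
  · exact absurd hdisj (Set.not_disjoint_iff.mpr ⟨x, hxT, y, hyT, hxy⟩)

theorem ncard_union_mul_image_union_mul_image_le (T : Set G) (a b : G) :
    (T ∪ (a * ·) '' T ∪ (b * ·) '' T).ncard ≤ 3 * T.ncard := by
  have ha : ((a * ·) '' T).ncard = T.ncard :=
    Set.ncard_image_of_injective _ (mul_right_injective a)
  have hb : ((b * ·) '' T).ncard = T.ncard :=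
    Set.ncard_image_of_injective _ (mul_right_injective b)
  calc (T ∪ (a * ·) '' T ∪ (b * ·) '' T).ncard
      ≤ (T ∪ (a * ·) '' T).ncard + ((b * ·) '' T).ncard := Set.ncard_union_le _ _
    _ ≤ T.ncard + ((a * ·) '' T).ncard + ((b * ·) '' T).ncard := by
        gcongr; exact Set.ncard_union_le _ _
    _ = 3 * T.ncard := by rw [ha, hb]; ring

end MaximalDisjointTranslate

theorem stmt_7_general {Γ : Type*} [Group Γ] (S : Finset Γ)
    (A k : ℕ) (s : Γ) (hs : s ≠ 1)
    (T : Set Γ) (hTfin : T.Finite)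
    (hdisj : Disjoint T ((s * ·) '' T))
    (hmax : ∀ g ∈ wordBall (S : Set Γ) (A * k), g ∉ T →
      ¬ Disjoint (insert g T) ((s * ·) '' insert g T)) :
    (wordBall (S : Set Γ) (A * k)).ncard ≤ 3 * T.ncard := by
  have hcover := subset_union_mul_image_of_maximal_disjoint hs hdisj hmax
  have hfin : (T ∪ (s * ·) '' T ∪ (s⁻¹ * ·) '' T).Finite :=
    (hTfin.union (hTfin.image _)).union (hTfin.image _)
  exact (Set.ncard_le_ncard hcover hfin).trans
    (ncard_union_mul_image_union_mul_image_le T s s⁻¹)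

/-- If `T ⊆ B_{Ak}` with `T ∩ sT = ∅` is maximal for inclusion (adding any further element of
`B_{Ak}` breaks disjointness from the `s`-translate), then `3|T| ≥ |B_{Ak}|`. -/
theorem stmt_7 {Γ : Type*} [Group Γ] [Infinite Γ] (S : Finset Γ)
    (hsym : ∀ s ∈ S, s⁻¹ ∈ S) (hgen : Subgroup.closure (S : Set Γ) = ⊤)
    (A k : ℕ) (s : Γ) (hs : s ≠ 1) (hsk : s ∈ wordBall (S : Set Γ) k)
    (T : Set Γ) (hTfin : T.Finite) (hT : T ⊆ wordBall (S : Set Γ) (A * k))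
    (hdisj : Disjoint T ((s * ·) '' T))
    (hmax : ∀ g ∈ wordBall (S : Set Γ) (A * k), g ∉ T →
      ¬ Disjoint (insert g T) ((s * ·) '' insert g T)) :
    (wordBall (S : Set Γ) (A * k)).ncard ≤ 3 * T.ncard :=
  stmt_7_general S A k s hs T hTfin hdisj hmax
end

section
/- The pentagon model graph is extraterrestrial. Specifically, for all m, r ∈ N, the sets U = {(h,v) : −3m ≤ h < 0, 0 ≤ v < r}, F = {(0,v) : −r ≤ v ≤ 2r−1}, O = {(h,v) : 0 < h ≤ 3m, 0 ≤ v < r} form an (m, 6m+1, r)-UFO in the pentagon model. -/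
open SimpleGraph Pointwise

/-- The pentagon model: the graph with vertex set `ℤ²`, edges `{(m,n),(m+1,n)}` and
`{(m,n),(2m,n-1)}`. -/
def pentagonGraph : SimpleGraph (ℤ × ℤ) where
  Adj p q := p ≠ q ∧
    ((p.2 = q.2 ∧ (q.1 = p.1 + 1 ∨ p.1 = q.1 + 1)) ∨
      (q.2 = p.2 - 1 ∧ q.1 = 2 * p.1) ∨ (p.2 = q.2 - 1 ∧ p.1 = 2 * q.1))
  symm := by
    constructor
    rintro p q ⟨hne, h⟩
    refine ⟨hne.symm, ?_⟩
    rcases h with ⟨h1, h2⟩ | h | h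
    · exact Or.inl ⟨h1.symm, h2.symm⟩
    · exact Or.inr (Or.inr h)
    · exact Or.inr (Or.inl h)
  loopless := by constructor; rintro p ⟨hne, _⟩; exact hne rfl

/-! Every neighbour of a vertex with negative first coordinate `h` (namely `h ± 1`, `2h`, `h/2`)
has nonpositive first coordinate, so the column `{0} × ℤ` separates the left half-plane from the
right one. Every edge changes the second coordinate by at most one, so a walk of length `< r`
from `U` to `O` meets the column at a height in `[-r+1, 2r-2]`, that is, inside `F`. The
reflection `(h, v) ↦ (-h, v)` matches `U` with `O` along horizontal paths of length `2|h| ≤ 6m`,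
and `|U| = 3mr = m|F|`. -/

namespace SimpleGraph.Walk

variable {V : Type*} {G : SimpleGraph V} {f : V → ℤ}

theorem abs_sub_le_length (hf : ∀ x y, G.Adj x y → |f y - f x| ≤ 1) {u v : V}
    (p : G.Walk u v) : |f v - f u| ≤ p.length := by
  induction p with
  | nil => simp
  | @cons a b c hab q ih =>
    calc |f c - f a| = |(f c - f b) + (f b - f a)| := by ring_nf
      _ ≤ |f c - f b| + |f b - f a| := abs_add_le _ _
      _ ≤ q.length + 1 := add_le_add ih (hf a b hab)
      _ = (cons hab q).length := by simp

theorem abs_sub_le_length_of_mem_support (hf : ∀ x y, G.Adj x y → |f y - f x| ≤ 1)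
    {u v x : V} (p : G.Walk u v) (hx : x ∈ p.support) : |f x - f u| ≤ p.length := by
  classical
  calc |f x - f u| ≤ (p.takeUntil x hx).length := abs_sub_le_length hf _
    _ ≤ p.length := by exact_mod_cast p.length_takeUntil_le_length hx

end SimpleGraph.Walk

theorem Int.ncard_Ico (a b : ℤ) : (Set.Ico a b).ncard = (b - a).toNat := by
  rw [← Set.coe_toFinset (Set.Ico a b), Set.ncard_coe_finset, Set.toFinset_Ico, Int.card_Ico]

theorem Int.ncard_Icc (a b : ℤ) : (Set.Icc a b).ncard = (b + 1 - a).toNat := by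
  rw [← Set.coe_toFinset (Set.Icc a b), Set.ncard_coe_finset, Set.toFinset_Icc, Int.card_Icc]

theorem IsUFO.mono {V : Type*} {G : SimpleGraph V} {m m' k r r' : ℕ} {U F O : Set V}
    (h : IsUFO G m' k r' U F O) (hm : m ≤ m') (hr : r ≤ r') : IsUFO G m k r U F O := by
  obtain ⟨hU, hUf, hFf, hOf, hUF, hUO, hFO, hcard, hmatch, hsep⟩ := h
  exact ⟨hU, hUf, hFf, hOf, hUF, hUO, hFO, (Nat.mul_le_mul_right _ hm).trans hcard, hmatch,
    fun u hu o ho p hp => hr.trans (hsep u hu o ho p hp)⟩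

theorem pentagonGraph_adj_abs_snd_sub_le_one {p q : ℤ × ℤ} (h : pentagonGraph.Adj p q) :
    |q.2 - p.2| ≤ 1 := by
  obtain ⟨-, h⟩ := h
  rw [abs_le]
  omega

theorem pentagonGraph_adj_fst_nonpos {p q : ℤ × ℤ} (h : pentagonGraph.Adj p q) (hp : p.1 < 0) :
    q.1 ≤ 0 := by
  obtain ⟨-, h⟩ := h
  omega

theorem pentagonGraph_walk_exists_fst_eq_zero {u v : ℤ × ℤ} (p : pentagonGraph.Walk u v)
    (hu : u.1 < 0) (hv : 0 < v.1) : ∃ x ∈ p.support, x.1 = 0 ∧ |x.2 - u.2| ≤ p.length := by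
  obtain ⟨d, hd, hfst, hsnd⟩ := p.exists_boundary_dart {x | x.1 < 0} hu (by simp; omega)
  have hsnd_mem := p.dart_snd_mem_support_of_mem_darts hd
  have := pentagonGraph_adj_fst_nonpos d.adj hfst
  refine ⟨d.snd, hsnd_mem, by simp at hsnd; omega, ?_⟩
  exact p.abs_sub_le_length_of_mem_support
    (fun _ _ h => pentagonGraph_adj_abs_snd_sub_le_one h) hsnd_mem

theorem pentagonGraph_exists_walk_horizontal (a v : ℤ) {b : ℤ} (hab : a ≤ b) :
    ∃ p : pentagonGraph.Walk (a, v) (b, v), p.length = (b - a).toNat := by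
  induction b, hab using Int.leInduction with
  | base => exact ⟨.nil, by simp⟩
  | succ b hab ih =>
    obtain ⟨p, hp⟩ := ih
    have hadj : pentagonGraph.Adj (b, v) (b + 1, v) := by simp [pentagonGraph]
    exact ⟨p.concat hadj, by rw [p.length_concat, hp]; omega⟩

theorem isUFO_pentagonGraph {m r : ℕ} (hm : 0 < m) (hr : 0 < r) :
    IsUFO pentagonGraph m (6 * m + 1) r
      {p : ℤ × ℤ | -(3 * (m : ℤ)) ≤ p.1 ∧ p.1 < 0 ∧ 0 ≤ p.2 ∧ p.2 < (r : ℤ)}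
      {p : ℤ × ℤ | p.1 = 0 ∧ -(r : ℤ) ≤ p.2 ∧ p.2 ≤ 2 * (r : ℤ) - 1}
      {p : ℤ × ℤ | 0 < p.1 ∧ p.1 ≤ 3 * (m : ℤ) ∧ 0 ≤ p.2 ∧ p.2 < (r : ℤ)} := by
  set U := {p : ℤ × ℤ | -(3 * (m : ℤ)) ≤ p.1 ∧ p.1 < 0 ∧ 0 ≤ p.2 ∧ p.2 < (r : ℤ)}
  set F := {p : ℤ × ℤ | p.1 = 0 ∧ -(r : ℤ) ≤ p.2 ∧ p.2 ≤ 2 * (r : ℤ) - 1}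
  set O := {p : ℤ × ℤ | 0 < p.1 ∧ p.1 ≤ 3 * (m : ℤ) ∧ 0 ≤ p.2 ∧ p.2 < (r : ℤ)}
  have hU : U = Set.Ico (-(3 * m : ℤ)) 0 ×ˢ Set.Ico 0 (r : ℤ) := by ext; simp [U]; tauto
  have hF : F = {0} ×ˢ Set.Icc (-(r : ℤ)) (2 * r - 1) := by ext; simp [F]
  have hO : O = Set.Ioc 0 (3 * m : ℤ) ×ˢ Set.Ico 0 (r : ℤ) := by ext; simp [O]; tauto
  have hUcard : U.ncard = 3 * m * r := by
    rw [hU, Set.ncard_prod, Int.ncard_Ico, Int.ncard_Ico, sub_zero, zero_sub, neg_neg]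
    norm_cast
  have hFcard : F.ncard = 3 * r := by
    rw [hF, Set.ncard_prod, Set.ncard_singleton, Int.ncard_Icc]; omega
  refine ⟨⟨(-1, 0), by simp [U]; omega⟩, hU ▸ (Set.finite_Ico _ _).prod (Set.finite_Ico _ _),
    hF ▸ (Set.finite_singleton _).prod (Set.finite_Icc _ _),
    hO ▸ (Set.finite_Ioc _ _).prod (Set.finite_Ico _ _), ?_, ?_, ?_, ?_, ?_, ?_⟩
  · exact Set.disjoint_left.2 fun _ ⟨_, hu, _⟩ ⟨hf, _⟩ => by omega
  · exact Set.disjoint_left.2 fun _ ⟨_, hu, _⟩ ⟨ho, _⟩ => by omega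
  · exact Set.disjoint_left.2 fun _ ⟨hf, _⟩ ⟨ho, _⟩ => by omega
  · rw [hUcard, hFcard, ← mul_assoc, mul_comm m 3]
  · refine ⟨fun p => (-p.1, p.2), Set.InvOn.bijOn (f' := fun p => (-p.1, p.2)) ?_ ?_ ?_, ?_⟩
    · constructor <;> intro p _ <;> simp
    · rintro ⟨a, b⟩ h
      simp only [U, O, Set.mem_ofPred_eq] at h ⊢; omega
    · rintro ⟨a, b⟩ h
      simp only [U, O, Set.mem_ofPred_eq] at h ⊢; omega
    · rintro ⟨a, b⟩ ⟨ha, ha', -⟩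
      obtain ⟨p, hp⟩ := pentagonGraph_exists_walk_horizontal a b (b := -a) (by omega)
      refine ⟨p.reachable, (SimpleGraph.dist_le p).trans ?_⟩
      omega
  · rintro u ⟨-, hu, hu₀, hur⟩ o ⟨ho, -⟩ p hp
    obtain ⟨x, hx, hx₀, hxu⟩ := pentagonGraph_walk_exists_fst_eq_zero p hu ho
    have hxF : x ∉ F := hp x hx
    simp only [F, Set.mem_ofPred_eq, hx₀, true_and, not_and, not_le] at hxF
    rw [abs_le] at hxu
    omega

/-- The pentagon model is extraterrestrial; specifically, for all positive `m, r` the sets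
`U = [-3m,-1] × [0,r-1]`, `F = {0} × [-r,2r-1]`, `O = [1,3m] × [0,r-1]` form an
`(m, 6m+1, r)`-UFO. -/
theorem stmt_10 :
    Extraterrestrial pentagonGraph ∧
    ∀ m r : ℕ, 0 < m → 0 < r →
      IsUFO pentagonGraph m (6 * m + 1) r
        {p : ℤ × ℤ | -(3 * (m : ℤ)) ≤ p.1 ∧ p.1 < 0 ∧ 0 ≤ p.2 ∧ p.2 < (r : ℤ)}
        {p : ℤ × ℤ | p.1 = 0 ∧ -(r : ℤ) ≤ p.2 ∧ p.2 ≤ 2 * (r : ℤ) - 1}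
        {p : ℤ × ℤ | 0 < p.1 ∧ p.1 ≤ 3 * (m : ℤ) ∧ 0 ≤ p.2 ∧ p.2 < (r : ℤ)} := by
  refine ⟨fun m => ⟨6 * (m + 1) + 1, fun r => ?_⟩, fun m r hm hr => isUFO_pentagonGraph hm hr⟩
  exact ⟨_, _, _, (isUFO_pentagonGraph m.succ_pos r.succ_pos).mono m.le_succ r.le_succ⟩
end

section
/- Let Γ be a finitely generated group and H ≤ Γ an amenable subgroup. If for some finite symmetric generating set S the Schreier graph Sch(Γ,H,S) is extraterrestrial, then Γ is extraterrestrial. -/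
/-!
Given `m`, take a `(2m, k, r)`-UFO `(U', F', O')` in the Schreier graph and let `R` be
representatives of the cosets in `U'`. A Schreier walk of length `≤ k` starting at `Hg` lifts to
a Cayley walk of length `≤ k` starting at any point of `Hg`, and a Cayley walk projects to a
Schreier walk that is no longer. Let `B` be the `r`-ball at `1` and `K` the finite set of
elements of `H` of the form `x b y⁻¹` with `x ∈ R`, `b ∈ B`, `y` a representative of a coset in
`F'`; amenability of `H` gives a finite `T ⊆ H` with `|TK| ≤ 2|T|`. Put `U = TR`, let `O` be the
endpoints of the lifted matching paths, and let `F` be the part of `UB` lying over `F'`.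
Then `F ⊆ TK·(representatives of F')`, so `m|F| ≤ 2m|T||F'| ≤ |T||U'| = |U|`, and a walk from
`U` to `O` shorter than `r` projects to a walk from `U'` to `O'`, which meets `F'` at the image of
a point of `UB`, that is, of `F`.
-/
open SimpleGraph Pointwise

/-- The Schreier graph of a group `Γ` with respect to a subgroup `H` and a set `S`:
vertices are the right cosets `Hg`, with an edge between `Hg` and `Hgs` for `s ∈ S`. -/
def schreierGraph {Γ : Type*} [Group Γ] (H : Subgroup Γ) (S : Set Γ) :
    SimpleGraph (Quotient (QuotientGroup.rightRel H)) where
  Adj x y := x ≠ y ∧ ∃ s ∈ S, ∃ g : Γ,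
      (x = Quotient.mk _ g ∧ y = Quotient.mk _ (g * s)) ∨
      (y = Quotient.mk _ g ∧ x = Quotient.mk _ (g * s))
  symm := ⟨by rintro x y ⟨hne, s, hs, g, h⟩; exact ⟨hne.symm, s, hs, g, h.symm⟩⟩
  loopless := ⟨by rintro x ⟨hne, _⟩; exact hne rfl⟩
open Pointwise in
/-- Følner characterization of amenability for discrete groups. -/
def FolnerAmenable (H : Type*) [Group H] : Prop :=
  ∀ (K : Finset H) (ε : ℝ), 0 < ε → ∃ F : Finset H, F.Nonempty ∧
    ((((F : Set H) * (K : Set H)) \ (F : Set H)).ncard : ℝ) ≤ ε * F.card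

/-- A finitely generated group is extraterrestrial if its Cayley graph with respect to some
(equivalently, any) finite symmetric generating set is extraterrestrial. -/
def GroupExtraterrestrial (Γ : Type*) [Group Γ] : Prop :=
  ∃ S : Finset Γ, (∀ s ∈ S, s⁻¹ ∈ S) ∧ Subgroup.closure (S : Set Γ) = ⊤ ∧
    Extraterrestrial (cayleyGraph Γ (S : Set Γ))

section Cosets

open Finset

variable {Γ : Type*} [Group Γ] {H : Subgroup Γ}

local notation "π" => Quotient.mk (QuotientGroup.rightRel H)

theorem mk_eq_mk_iff {a b : Γ} : π a = π b ↔ b * a⁻¹ ∈ H :=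
  Quotient.eq.trans QuotientGroup.rightRel_apply

theorem mk_mul_of_mem {h : Γ} (hh : h ∈ H) (γ : Γ) : π (h * γ) = π γ := by
  rw [mk_eq_mk_iff, mul_inv_rev, mul_inv_cancel_left]
  exact inv_mem hh

theorem mk_mul_eq_mk_mul {a b : Γ} (h : π a = π b) (c : Γ) : π (a * c) = π (b * c) := by
  rw [mk_eq_mk_iff] at h ⊢
  simpa [mul_assoc] using h

theorem cayleyGraph_adj_mul_right {S : Set Γ} {γ σ : Γ} :
    (cayleyGraph Γ S).Adj γ (γ * σ) ↔ σ ≠ 1 ∧ (σ ∈ S ∨ σ⁻¹ ∈ S) := by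
  simp [cayleyGraph]

theorem schreierGraph.exists_lift_of_adj {S : Set Γ} {x z : Quotient (QuotientGroup.rightRel H)}
    (h : (schreierGraph H S).Adj x z) :
    ∃ σ : Γ, ∀ γ, π γ = x → (cayleyGraph Γ S).Adj γ (γ * σ) ∧ π (γ * σ) = z := by
  obtain ⟨hne, s, hs, g, ⟨rfl, rfl⟩ | ⟨rfl, rfl⟩⟩ := h
  · refine ⟨s, fun γ hγ => ?_⟩
    have hγs : π (γ * s) = π (g * s) := mk_mul_eq_mk_mul hγ s
    refine ⟨cayleyGraph_adj_mul_right.2 ⟨?_, .inl hs⟩, hγs⟩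
    rintro rfl
    exact hne (by rw [← hγ, ← hγs, mul_one])
  · refine ⟨s⁻¹, fun γ hγ => ?_⟩
    have hγs : π (γ * s⁻¹) = π g := by simpa using mk_mul_eq_mk_mul hγ s⁻¹
    refine ⟨cayleyGraph_adj_mul_right.2 ⟨?_, .inr (by simpa using hs)⟩, hγs⟩
    rintro h1
    exact hne (by rw [← hγ, ← hγs, h1, mul_one])

theorem schreierGraph.exists_lift_walk {S : Set Γ} {x y : Quotient (QuotientGroup.rightRel H)}
    (q : (schreierGraph H S).Walk x y) :
    ∃ w : Γ, ∀ γ, π γ = x →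
      π (γ * w) = y ∧ ∃ p : (cayleyGraph Γ S).Walk γ (γ * w), p.length ≤ q.length := by
  induction q with
  | nil => exact ⟨1, fun γ hγ => ⟨by simpa using hγ, (Walk.nil).copy rfl (mul_one γ).symm, by simp⟩⟩
  | cons h q ih =>
    obtain ⟨σ, hσ⟩ := exists_lift_of_adj h
    obtain ⟨w, hw⟩ := ih
    refine ⟨σ * w, fun γ hγ => ?_⟩
    obtain ⟨hadj, hγσ⟩ := hσ γ hγ
    obtain ⟨hy, p, hp⟩ := hw (γ * σ) hγσ
    refine ⟨by rwa [← mul_assoc], (Walk.cons hadj p).copy rfl (mul_assoc γ σ w), ?_⟩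
    simpa using hp

theorem schreierGraph.exists_lift_of_dist_le {S : Set Γ} {x y : Quotient (QuotientGroup.rightRel H)}
    {k : ℕ} (hxy : (schreierGraph H S).Reachable x y) (hk : (schreierGraph H S).dist x y ≤ k) :
    ∃ w : Γ, ∀ γ, π γ = x → π (γ * w) = y ∧
      (cayleyGraph Γ S).Reachable γ (γ * w) ∧ (cayleyGraph Γ S).dist γ (γ * w) ≤ k := by
  obtain ⟨q, hq⟩ := hxy.exists_walk_length_eq_dist
  obtain ⟨w, hw⟩ := exists_lift_walk q
  refine ⟨w, fun γ hγ => ?_⟩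
  obtain ⟨hy, p, hp⟩ := hw γ hγ
  exact ⟨hy, p.reachable, (dist_le p).trans (hp.trans (hq ▸ hk))⟩

theorem cayleyGraph.exists_walk_mk {S : Set Γ} {γ δ : Γ} (p : (cayleyGraph Γ S).Walk γ δ) :
    ∃ q : (schreierGraph H S).Walk (π γ) (π δ),
      q.length ≤ p.length ∧ ∀ y ∈ q.support, ∃ c ∈ p.support, π c = y := by
  induction p with
  | nil => exact ⟨Walk.nil, le_rfl, by simp⟩
  | @cons γ b δ h p ih =>
    obtain ⟨q, hlen, hsupp⟩ := ih
    by_cases he : π γ = π b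
    · refine ⟨q.copy he.symm rfl, by simpa using hlen.trans (Nat.le_succ _), fun y hy => ?_⟩
      obtain ⟨c, hc, rfl⟩ := hsupp y (by simpa using hy)
      exact ⟨c, by simp [hc], rfl⟩
    · have hadj : (schreierGraph H S).Adj (π γ) (π b) := by
        obtain ⟨-, hs | hs⟩ := h
        · exact ⟨he, γ⁻¹ * b, hs, γ, .inl ⟨rfl, by simp⟩⟩
        · exact ⟨he, b⁻¹ * γ, hs, b, .inr ⟨rfl, by simp⟩⟩
      refine ⟨.cons hadj q, by simpa using hlen, fun y hy => ?_⟩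
      rcases List.mem_cons.1 (Walk.support_cons hadj q ▸ hy) with rfl | hy
      · exact ⟨γ, by simp, rfl⟩
      · obtain ⟨c, hc, rfl⟩ := hsupp y hy
        exact ⟨c, by simp [hc], rfl⟩

theorem cayleyGraph.inv_mul_mem_pow_of_mem_support [DecidableEq Γ] {S : Finset Γ} {u v : Γ}
    (p : (cayleyGraph Γ (S : Set Γ)).Walk u v) :
    ∀ c ∈ p.support, u⁻¹ * c ∈ insert 1 (S ∪ S⁻¹) ^ p.length := by
  induction p with
  | nil => simp
  | @cons u b v h p ih =>
    intro c hc
    rcases List.mem_cons.1 (Walk.support_cons h p ▸ hc) with rfl | hc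
    · simpa using one_mem_pow (mem_insert_self _ _)
    · have hstep : u⁻¹ * b ∈ insert 1 (S ∪ S⁻¹) := by
        rw [mem_insert, mem_union, mem_inv', mul_inv_rev, inv_inv]
        exact .inr h.2
      rw [Walk.length_cons, pow_succ', ← mul_inv_cancel_left b c, ← mul_assoc]
      exact mul_mem_mul hstep (ih c hc)

theorem cayleyGraph.exists_mem_support_mk_mem [DecidableEq Γ] {S : Finset Γ}
    {U' F' O' : Set (Quotient (QuotientGroup.rightRel H))} {r : ℕ}
    (hpath : ∀ x ∈ U', ∀ z ∈ O', ∀ q : (schreierGraph H (S : Set Γ)).Walk x z,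
      (∀ y ∈ q.support, y ∉ F') → r ≤ q.length)
    {u o : Γ} (hu : π u ∈ U') (ho : π o ∈ O') (p : (cayleyGraph Γ (S : Set Γ)).Walk u o)
    (hp : p.length < r) :
    ∃ c ∈ p.support, π c ∈ F' ∧ u⁻¹ * c ∈ insert 1 (S ∪ S⁻¹) ^ r := by
  obtain ⟨q, hq, hsupp⟩ := exists_walk_mk (H := H) p
  obtain ⟨y, hy, hyF⟩ : ∃ y ∈ q.support, y ∈ F' := by
    by_contra! hq'
    exact (hpath _ hu _ ho q hq').not_gt (hq.trans_lt hp)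
  obtain ⟨c, hc, rfl⟩ := hsupp y hy
  exact ⟨c, hc, hyF, pow_subset_pow_right (mem_insert_self _ _) hp.le
    (inv_mul_mem_pow_of_mem_support p c hc)⟩

theorem FolnerAmenable.exists_card_mul_le {G : Type*} [Group G] [DecidableEq G]
    (hG : FolnerAmenable G) (K : Finset G) : ∃ T : Finset G, T.Nonempty ∧ #(T * K) ≤ 2 * #T := by
  obtain ⟨T, hTne, hT⟩ := hG K 1 one_pos
  refine ⟨T, hTne, ?_⟩
  have hdiff : #((T * K) \ T) ≤ #T := by
    rw [← Set.ncard_coe_finset, coe_sdiff, coe_mul]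
    exact_mod_cast (one_mul (#T : ℝ)) ▸ hT
  calc #(T * K) ≤ #((T * K) \ T) + #T := card_le_card_sdiff_add_card
    _ ≤ 2 * #T := by omega

theorem FolnerAmenable.exists_subset_card_mul_le [DecidableEq Γ] (hH : FolnerAmenable H)
    (K : Finset Γ) (hK : ∀ x ∈ K, x ∈ H) :
    ∃ T : Finset Γ, T.Nonempty ∧ (∀ t ∈ T, t ∈ H) ∧ #(T * K) ≤ 2 * #T := by
  classical
  obtain ⟨T, hTne, hT⟩ := hH.exists_card_mul_le (K.subtype (· ∈ H))
  have hK' : (K.subtype (· ∈ H)).image H.subtype = K := by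
    ext x; simpa using fun hx => hK x hx
  refine ⟨T.image H.subtype, hTne.image _, fun t ht => ?_, ?_⟩
  · obtain ⟨t, -, rfl⟩ := mem_image.1 ht
    exact t.2
  rwa [← hK', ← image_mul, card_image_of_injective _ H.subtype_injective,
    card_image_of_injective _ H.subtype_injective]

theorem mk_mem_of_mem_mul_image_out [DecidableEq Γ] {T : Finset Γ} (hT : ∀ t ∈ T, t ∈ H)
    {U' : Finset (Quotient (QuotientGroup.rightRel H))} {u : Γ}
    (hu : u ∈ T * U'.image Quotient.out) : π u ∈ U' := by
  obtain ⟨t, ht, _, hx, rfl⟩ := mem_mul.1 hu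
  obtain ⟨x, hx, rfl⟩ := mem_image.1 hx
  rwa [mk_mul_of_mem (hT t ht), Quotient.out_eq]

theorem injOn_mul_mk {U' : Set (Quotient (QuotientGroup.rightRel H))}
    {f' : Quotient (QuotientGroup.rightRel H) → Quotient (QuotientGroup.rightRel H)}
    (hf' : Set.InjOn f' U') {w : Quotient (QuotientGroup.rightRel H) → Γ}
    (hw : ∀ γ, π γ ∈ U' → π (γ * w (π γ)) = f' (π γ)) :
    Set.InjOn (fun γ => γ * w (π γ)) (π ⁻¹' U') := by
  intro u hu u' hu' huu'
  have hπ : π u = π u' := hf' hu hu' <| by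
    rw [← hw u hu, ← hw u' hu']
    exact congrArg π huu'
  simpa [hπ] using huu'

theorem card_mul_image_out [DecidableEq Γ] {T : Finset Γ} (hT : ∀ t ∈ T, t ∈ H)
    (U' : Finset (Quotient (QuotientGroup.rightRel H))) :
    #(T * U'.image Quotient.out) = #T * #U' := by
  have hπ : ∀ t ∈ T, ∀ x, π (t * Quotient.out x) = x := fun t ht x => by
    rw [mk_mul_of_mem (hT t ht), Quotient.out_eq]
  rw [← card_image_of_injective U' Quotient.out_injective, card_mul_iff, coe_image]
  rintro ⟨t, _⟩ ⟨ht, x, -, rfl⟩ ⟨t', _⟩ ⟨ht', y, -, rfl⟩ h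
  obtain rfl : x = y := by simpa [hπ t ht, hπ t' ht'] using congrArg π h
  simpa using h

theorem card_filter_mk_mem_le [DecidableEq Γ] [DecidablePred (· ∈ H)]
    [DecidableEq (Quotient (QuotientGroup.rightRel H))] {T : Finset Γ} (hT : ∀ t ∈ T, t ∈ H)
    (D : Finset Γ) (F' : Finset (Quotient (QuotientGroup.rightRel H))) :
    #((T * D).filter (π · ∈ F')) ≤
      #(T * (D * (F'.image Quotient.out)⁻¹).filter (· ∈ H)) * #F' := by
  have hsub : (T * D).filter (π · ∈ F') ⊆
      T * (D * (F'.image Quotient.out)⁻¹).filter (· ∈ H) * F'.image Quotient.out := by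
    intro c hc
    obtain ⟨hc, hcF⟩ := mem_filter.1 hc
    obtain ⟨t, ht, d, hd, rfl⟩ := mem_mul.1 hc
    set y := π (t * d) with hy
    have hdy : d * y.out⁻¹ ∈ H :=
      mk_eq_mk_iff.1 (by rw [Quotient.out_eq, hy, mk_mul_of_mem (hT t ht)])
    rw [← inv_mul_cancel_right d y.out, ← mul_assoc]
    exact mul_mem_mul (mul_mem_mul ht (mem_filter.2 ⟨mul_mem_mul hd (inv_mem_inv
      (mem_image_of_mem _ hcF)), hdy⟩)) (mem_image_of_mem _ hcF)
  calc _ ≤ #(T * (D * (F'.image Quotient.out)⁻¹).filter (· ∈ H) * F'.image Quotient.out) :=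
        card_le_card hsub
    _ ≤ _ := card_mul_le.trans (Nat.mul_le_mul_left _ card_image_le)

theorem IsUFO.exists_cayleyGraph_of_schreierGraph (hH : FolnerAmenable H) {S : Finset Γ}
    {m k r : ℕ} {U' F' O' : Set (Quotient (QuotientGroup.rightRel H))}
    (h : IsUFO (schreierGraph H (S : Set Γ)) (2 * m) k r U' F' O') :
    ∃ U F O : Set Γ, IsUFO (cayleyGraph Γ (S : Set Γ)) m k r U F O := by
  classical
  obtain ⟨hU'ne, hU'fin, hF'fin, -, hUF', hUO', hFO', hcard, ⟨f', hf', hmatch⟩, hpath⟩ := h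
  lift U' to Finset (Quotient (QuotientGroup.rightRel H)) using hU'fin
  lift F' to Finset (Quotient (QuotientGroup.rightRel H)) using hF'fin
  choose! w hw using fun x hx =>
    schreierGraph.exists_lift_of_dist_le (hmatch x hx).1 (hmatch x hx).2
  set R := U'.image Quotient.out
  set B := insert 1 (S ∪ S⁻¹) ^ r
  obtain ⟨T, hTne, hTH, hTK⟩ := hH.exists_subset_card_mul_le
    ((R * B * (F'.image Quotient.out)⁻¹).filter (· ∈ H)) (fun _ hx => (mem_filter.1 hx).2)
  set g : Γ → Γ := fun γ => γ * w (π γ)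
  have hU : ∀ u ∈ T * R, π u ∈ U' := fun u hu => mk_mem_of_mem_mul_image_out hTH hu
  have hg : ∀ u ∈ T * R, π (g u) = f' (π u) ∧ (cayleyGraph Γ (S : Set Γ)).Reachable u (g u) ∧
      (cayleyGraph Γ (S : Set Γ)).dist u (g u) ≤ k :=
    fun u hu => hw _ (hU u hu) u rfl
  have hgO : ∀ o ∈ (T * R).image g, π o ∈ O' := by
    intro o ho
    obtain ⟨u, hu, rfl⟩ := mem_image.1 ho
    exact (hg u hu).1 ▸ hf'.mapsTo (hU u hu)
  have hg_inj : Set.InjOn g (T * R : Finset Γ) :=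
    (injOn_mul_mk hf'.injOn fun γ hγ => (hw _ hγ γ rfl).1).mono fun u hu => hU u hu
  refine ⟨↑(T * R), ↑((T * (R * B)).filter (π · ∈ F')), ↑((T * R).image g), ?_, finite_toSet _,
    finite_toSet _, finite_toSet _, ?_, ?_, ?_, ?_, ⟨g, ?_, fun u hu => (hg u hu).2⟩, ?_⟩
  · exact coe_nonempty.2 (hTne.mul (coe_nonempty.1 hU'ne |>.image _))
  · exact (hUF'.preimage π).mono (fun u hu => hU u hu) (fun c hc => (mem_filter.1 hc).2)
  · exact (hUO'.preimage π).mono (fun u hu => hU u hu) (fun o ho => hgO o ho)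
  · exact (hFO'.preimage π).mono (fun c hc => (mem_filter.1 hc).2) (fun o ho => hgO o ho)
  · simp only [Set.ncard_coe_finset] at hcard ⊢
    rw [card_mul_image_out hTH]
    calc m * #((T * (R * B)).filter (π · ∈ F')) ≤ m * (2 * #T * #F') := by
          gcongr
          exact (card_filter_mk_mem_le hTH (R * B) F').trans (Nat.mul_le_mul_right _ hTK)
      _ = #T * (2 * m * #F') := by ring
      _ ≤ #T * #U' := by gcongr
  · rw [coe_image]
    exact hg_inj.bijOn_image
  · intro u hu o ho p havoid
    by_contra! hlt
    obtain ⟨c, hc, hcF, hcB⟩ :=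
      cayleyGraph.exists_mem_support_mk_mem hpath (hU u hu) (hgO o ho) p hlt
    refine havoid c hc (mem_filter.2 ⟨?_, hcF⟩)
    rw [← mul_assoc, ← mul_inv_cancel_left u c]
    exact mul_mem_mul hu hcB

end Cosets

theorem stmt_14_general {Γ : Type*} [Group Γ] (H : Subgroup Γ) (hH : FolnerAmenable H)
    (S : Finset Γ)
    (hSch : Extraterrestrial (schreierGraph H (S : Set Γ))) :
    Extraterrestrial (cayleyGraph Γ (S : Set Γ)) := by
  intro m
  obtain ⟨k, hk⟩ := hSch (2 * m)
  refine ⟨k, fun r => ?_⟩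
  obtain ⟨U', F', O', hUFO⟩ := hk r
  exact hUFO.exists_cayleyGraph_of_schreierGraph hH

/-- If `H ≤ Γ` is an amenable subgroup and the Schreier graph `Sch(Γ,H,S)` is extraterrestrial
for some finite symmetric generating set `S`, then `Γ` is extraterrestrial. -/
theorem stmt_14 {Γ : Type*} [Group Γ] (H : Subgroup Γ) (hH : FolnerAmenable H)
    (S : Finset Γ) (hsym : ∀ s ∈ S, s⁻¹ ∈ S) (hgen : Subgroup.closure (S : Set Γ) = ⊤)
    (hSch : Extraterrestrial (schreierGraph H (S : Set Γ))) :
    Extraterrestrial (cayleyGraph Γ (S : Set Γ)) :=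
  stmt_14_general H hH S hSch
end

section
/- In a free product with amalgamation G₁ *_H G₂ where both embeddings H → G₁ and H → G₂ are proper (not surjective), let g₁ ∈ G₁ be a nontrivial coset representative of H\G₁ and g₂ ∈ G₂ a nontrivial coset representative of H\G₂. Then for every n ≥ 1, the cosets H(g₁g₂)ⁿ and H(g₂g₁)ⁿ are distinct and lie in distinct connected components of the Schreier graph Sch(G₁*_H G₂, H, S) after removing the vertex H, where S = S₁ ∪ S₂ for finite symmetric generating sets S₁, S₂ of G₁, G₂. -/
theorem SimpleGraph.Walk.of_adj_imp_of_notMem_support {V : Type*} {Γ : SimpleGraph V}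
    (P : V → Prop) {c : V} (hP : ∀ u v, Γ.Adj u v → u ≠ c → v ≠ c → P u → P v) :
    ∀ {u v : V} (p : Γ.Walk u v), c ∉ p.support → P u → P v
  | _, _, .nil, _, hu => hu
  | _, _, .cons hadj p, hc, hu => by
    rw [support_cons, List.mem_cons, not_or] at hc
    exact p.of_adj_imp_of_notMem_support P hP hc.2
      (hP _ _ hadj (Ne.symm hc.1) (fun e => hc.2 (e ▸ p.start_mem_support)) hu)

theorem QuotientGroup.mk_rightRel_eq_mk_one_iff {Γ : Type*} [Group Γ] {K : Subgroup Γ} {g : Γ} :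
    Quotient.mk (rightRel K) g = Quotient.mk (rightRel K) 1 ↔ g ∈ K := by
  rw [Quotient.eq, rightRel_apply, one_mul, inv_mem_iff]

namespace Monoid.PushoutI

variable {ι : Type*} {G : ι → Type*}

theorem head?_map_fst_concat (L : List (Σ i, G i)) {j : ι} (x y : G j) :
    (L ++ [⟨j, x⟩] : List (Σ i, G i)).head?.map Sigma.fst =
      (L ++ [⟨j, y⟩] : List (Σ i, G i)).head?.map Sigma.fst := by
  cases L <;> rfl

variable {H : Type*} [∀ i, Group (G i)] [Group H] (φ : ∀ i, H →* G i)

def IsReducedList (L : List (Σ i, G i)) : Prop :=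
  (∀ p ∈ L, p.2 ∉ (φ p.1).range) ∧ L.IsChain (fun p q => p.1 ≠ q.1)

def listProd (L : List (Σ i, G i)) : PushoutI φ :=
  (L.map fun p => of p.1 p.2).prod

def HasFstIdx (g : PushoutI φ) (o : Option ι) : Prop :=
  ∃ (h : H) (L : List (Σ i, G i)), IsReducedList φ L ∧ g = base φ h * listProd φ L ∧
    L.head?.map Sigma.fst = o

variable {φ}

@[simp] theorem listProd_nil : listProd φ ([] : List (Σ i, G i)) = 1 := rfl

@[simp] theorem listProd_cons (p : Σ i, G i) (L : List (Σ i, G i)) :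
    listProd φ (p :: L) = of p.1 p.2 * listProd φ L := List.prod_cons

@[simp] theorem listProd_append (L M : List (Σ i, G i)) :
    listProd φ (L ++ M) = listProd φ L * listProd φ M := by
  simp [listProd]

@[simp] theorem listProd_singleton (p : Σ i, G i) : listProd φ [p] = of p.1 p.2 := by
  simp [listProd]

theorem isReducedList_nil : IsReducedList φ ([] : List (Σ i, G i)) := by
  simp [IsReducedList]

theorem isReducedList_cons {i : ι} {x : G i} {L : List (Σ i, G i)} :
    IsReducedList φ (⟨i, x⟩ :: L) ↔
      x ∉ (φ i).range ∧ IsReducedList φ L ∧ ∀ q ∈ L.head?, i ≠ q.1 := by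
  simp only [IsReducedList, List.mem_cons, forall_eq_or_imp, List.isChain_cons]
  tauto

theorem isReducedList_concat {L : List (Σ i, G i)} {j : ι} {x : G j} :
    IsReducedList φ (L ++ [⟨j, x⟩]) ↔
      IsReducedList φ L ∧ x ∉ (φ j).range ∧ ∀ p ∈ L.getLast?, p.1 ≠ j := by
  simp only [IsReducedList, List.mem_append, List.mem_singleton, List.isChain_append,
    List.isChain_singleton, List.head?_singleton, Option.mem_def, Option.some.injEq]
  constructor
  · rintro ⟨hL, hc, -, hlast⟩
    exact ⟨⟨fun p hp => hL p (.inl hp), hc⟩, hL _ (.inr rfl), fun p hp => hlast p hp _ rfl⟩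
  · rintro ⟨⟨hL, hc⟩, hx, hlast⟩
    refine ⟨?_, hc, trivial, fun p hp q hq => hq ▸ hlast p hp⟩
    rintro p (hp | rfl)
    exacts [hL p hp, hx]

theorem listProd_concat_mul_base (L : List (Σ i, G i)) {j : ι} (x : G j) (k : H) :
    listProd φ (L ++ [⟨j, x⟩]) * base φ k = listProd φ (L ++ [⟨j, x * φ j k⟩]) := by
  simp [mul_assoc, ← of_apply_eq_base φ j k]

def IsReducedList.toWord {L : List (Σ i, G i)} (hL : IsReducedList φ L) : CoprodI.Word G :=
  ⟨L, fun p hp h1 => hL.1 p hp (h1 ▸ one_mem _), hL.2⟩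

theorem IsReducedList.reduced_toWord {L : List (Σ i, G i)} (hL : IsReducedList φ L) :
    Reduced φ hL.toWord :=
  hL.1

theorem IsReducedList.ofCoprodI_prod_toWord {L : List (Σ i, G i)} (hL : IsReducedList φ L) :
    ofCoprodI hL.toWord.prod = listProd φ L := by
  simp [CoprodI.Word.prod, IsReducedList.toWord, listProd, map_list_prod, Function.comp_def]

theorem hasFstIdx_base_mul_listProd {L : List (Σ i, G i)} (hL : IsReducedList φ L) (h : H) :
    HasFstIdx φ (base φ h * listProd φ L) (L.head?.map Sigma.fst) :=
  ⟨h, L, hL, rfl, rfl⟩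

theorem HasFstIdx.base_mul {g : PushoutI φ} {o : Option ι} (hg : HasFstIdx φ g o) (k : H) :
    HasFstIdx φ (base φ k * g) o := by
  obtain ⟨h, L, hL, rfl, rfl⟩ := hg
  simpa [mul_assoc] using hasFstIdx_base_mul_listProd hL (k * h)

theorem HasFstIdx.mul_base {g : PushoutI φ} {a : ι} (hg : HasFstIdx φ g (some a)) (k : H) :
    HasFstIdx φ (g * base φ k) (some a) := by
  obtain ⟨h, L, hL, rfl, hhead⟩ := hg
  obtain ⟨L₀, ⟨j, x⟩, rfl⟩ :=
    (List.eq_nil_or_concat' L).resolve_left (by rintro rfl; simp at hhead)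
  obtain ⟨hL₀, hx, hlast⟩ := isReducedList_concat.1 hL
  have hxk : x * φ j k ∉ (φ j).range := fun hr =>
    hx ((mul_mem_cancel_right (MonoidHom.mem_range.2 ⟨k, rfl⟩)).1 hr)
  refine ⟨h, L₀ ++ [⟨j, x * φ j k⟩], isReducedList_concat.2 ⟨hL₀, hxk, hlast⟩, ?_, ?_⟩
  · rw [mul_assoc, listProd_concat_mul_base]
  · rwa [head?_map_fst_concat]

theorem HasFstIdx.mul_of {g : PushoutI φ} {a i : ι} {s : G i} (hg : HasFstIdx φ g (some a))
    (hgs : g * of i s ∉ (base φ).range) : HasFstIdx φ (g * of i s) (some a) := by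
  by_cases hs : s ∈ (φ i).range
  · obtain ⟨k, rfl⟩ := hs
    rw [of_apply_eq_base]
    exact hg.mul_base k
  obtain ⟨h, L, hL, rfl, hhead⟩ := hg
  obtain ⟨L₀, ⟨j, x⟩, rfl⟩ :=
    (List.eq_nil_or_concat' L).resolve_left (by rintro rfl; simp at hhead)
  obtain ⟨hL₀, hx, hlast⟩ := isReducedList_concat.1 hL
  by_cases hji : j = i
  · subst hji
    by_cases hxs : x * s ∈ (φ j).range
    · obtain ⟨k, hk⟩ := hxs
      have hprod : base φ h * listProd φ (L₀ ++ [⟨j, x⟩]) * of j s =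
          base φ h * listProd φ L₀ * base φ k := by
        rw [listProd_append, mul_assoc, mul_assoc, listProd_singleton, ← map_mul, ← hk,
          of_apply_eq_base, mul_assoc]
      rw [hprod] at hgs ⊢
      rcases L₀ with _ | ⟨⟨b, y⟩, L₁⟩
      · exact absurd (MonoidHom.mem_range.2 ⟨h * k, by simp⟩) hgs
      · obtain rfl : b = a := by simpa using hhead
        exact (hasFstIdx_base_mul_listProd hL₀ h).mul_base k
    · refine ⟨h, L₀ ++ [⟨j, x * s⟩], isReducedList_concat.2 ⟨hL₀, hxs, hlast⟩,
        by simp [mul_assoc], by rwa [head?_map_fst_concat]⟩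
  · refine ⟨h, L₀ ++ [⟨j, x⟩] ++ [⟨i, s⟩], ?_, by simp [mul_assoc],
      by rwa [List.head?_append_of_ne_nil _ (by simp)]⟩
    exact isReducedList_concat.2 ⟨hL, hs, by simpa using hji⟩

theorem HasFstIdx.unique (hφ : ∀ i, Function.Injective (φ i)) {g : PushoutI φ}
    {o o' : Option ι} (h₁ : HasFstIdx φ g o) (h₂ : HasFstIdx φ g o') : o = o' := by
  classical
  obtain ⟨d⟩ := NormalWord.transversal_nonempty φ hφ
  obtain ⟨h, L, hL, rfl, rfl⟩ := h₁
  obtain ⟨h', L', hL', heq, rfl⟩ := h₂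
  obtain ⟨w, hw, hwL⟩ := hL.reduced_toWord.exists_normalWord_prod_eq d
  obtain ⟨w', hw', hwL'⟩ := hL'.reduced_toWord.exists_normalWord_prod_eq d
  have hsmul : h • w = h' • w' := NormalWord.prod_injective <| by
    rw [NormalWord.prod_base_smul, NormalWord.prod_base_smul, hw, hw',
      hL.ofCoprodI_prod_toWord, hL'.ofCoprodI_prod_toWord, heq]
  have hlist : w.toList = w'.toList := by
    simpa [NormalWord.base_smul_def'] using congrArg (·.toList) hsmul
  have hmap : L.map Sigma.fst = L'.map Sigma.fst :=
    hwL.symm.trans ((congrArg _ hlist).trans hwL')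
  rw [← List.head?_map, ← List.head?_map, hmap]

theorem HasFstIdx.notMem_range (hφ : ∀ i, Function.Injective (φ i)) {g : PushoutI φ} {a : ι}
    (hg : HasFstIdx φ g (some a)) : g ∉ (base φ).range := by
  rintro ⟨k, rfl⟩
  simpa using hg.unique hφ ⟨k, [], isReducedList_nil, by simp, rfl⟩

theorem HasFstIdx.of_mk_eq {g g' : PushoutI φ} {o : Option ι} (hg : HasFstIdx φ g o)
    (e : Quotient.mk (QuotientGroup.rightRel (base φ).range) g = Quotient.mk _ g') :
    HasFstIdx φ g' o := by
  obtain ⟨k, hk⟩ := QuotientGroup.rightRel_apply.1 (Quotient.exact e)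
  simpa [hk] using hg.base_mul k

theorem hasFstIdx_pow {i j : ι} (hij : i ≠ j) {a : G i} (ha : a ∉ (φ i).range) {b : G j}
    (hb : b ∉ (φ j).range) {n : ℕ} (hn : n ≠ 0) :
    HasFstIdx φ ((of i a * of j b) ^ n) (some i) := by
  obtain ⟨m, rfl⟩ := Nat.exists_eq_succ_of_ne_zero hn
  suffices ∃ L, IsReducedList φ L ∧ listProd φ L = (of i a * of j b) ^ (m + 1) ∧
      L.head?.map Sigma.fst = some i by
    obtain ⟨L, hL, hprod, hhead⟩ := this
    simpa [hprod, hhead] using hasFstIdx_base_mul_listProd hL 1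
  induction m with
  | zero =>
    refine ⟨[⟨i, a⟩, ⟨j, b⟩], ?_, by simp, rfl⟩
    simp [isReducedList_cons, isReducedList_nil, ha, hb, hij]
  | succ m ih =>
    obtain ⟨L, hL, hprod, hhead⟩ := ih (Nat.succ_ne_zero m)
    refine ⟨⟨i, a⟩ :: ⟨j, b⟩ :: L, ?_, by simp [hprod, pow_succ' _ (m + 1), mul_assoc],
      rfl⟩
    refine isReducedList_cons.2 ⟨ha, isReducedList_cons.2 ⟨hb, hL, ?_⟩, by simpa using hij⟩
    intro q hq
    rw [hq] at hhead
    exact Option.some.inj hhead ▸ hij.symm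

theorem HasFstIdx.of_schreierGraph_walk {S : Set (PushoutI φ)}
    (hS : ∀ s ∈ S, ∃ i, ∃ t : G i, of i t = s) {g g' : PushoutI φ} {a : ι}
    (hg : HasFstIdx φ g (some a))
    (p : (schreierGraph (base φ).range S).Walk (Quotient.mk _ g) (Quotient.mk _ g'))
    (h1 : Quotient.mk _ 1 ∉ p.support) : HasFstIdx φ g' (some a) := by
  refine Exists.elim (p.of_adj_imp_of_notMem_support
    (fun q => ∃ g, Quotient.mk _ g = q ∧ HasFstIdx φ g (some a)) ?_ h1 ⟨g, rfl, hg⟩)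
    fun g'' ⟨e, hg''⟩ => hg''.of_mk_eq e
  rintro u v ⟨-, s, hs, x, hedge⟩ - hv ⟨g₀, rfl, hg₀⟩
  obtain ⟨i, t, rfl⟩ := hS s hs
  have hv' : ∀ y, v = Quotient.mk _ y → y ∉ (base φ).range := fun y hy hr =>
    hv (hy ▸ QuotientGroup.mk_rightRel_eq_mk_one_iff.2 hr)
  rcases hedge with ⟨e, rfl⟩ | ⟨rfl, e⟩
  · exact ⟨_, rfl, (hg₀.of_mk_eq e).mul_of (hv' _ rfl)⟩
  · refine ⟨x, rfl, ?_⟩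
    have hx : x * of i t * of i t⁻¹ ∉ (base φ).range := by simpa [mul_assoc] using hv' x rfl
    simpa [mul_assoc] using (hg₀.of_mk_eq e).mul_of hx

end Monoid.PushoutI

open Monoid PushoutI in
theorem stmt_16_general {H : Type*} {G : Bool → Type*} [Group H] [∀ i, Group (G i)]
    (φ : ∀ i, H →* G i) (hinj : ∀ i, Function.Injective (φ i))
    (S₁ : Finset (G true))
    (S₂ : Finset (G false))
    (g₁ : G true) (hg₁ : g₁ ∉ (φ true).range)
    (g₂ : G false) (hg₂ : g₂ ∉ (φ false).range)
    (n : ℕ) (hn : 1 ≤ n)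
    (Hsub : Subgroup (PushoutI φ)) (hHsub : Hsub = (base φ).range)
    (S : Set (PushoutI φ))
    (hS : S = (of (φ := φ) true) '' (S₁ : Set (G true)) ∪
      (of (φ := φ) false) '' (S₂ : Set (G false))) :
    Quotient.mk (QuotientGroup.rightRel Hsub)
        ((of (φ := φ) true g₁ * of (φ := φ) false g₂) ^ n) ≠
      Quotient.mk (QuotientGroup.rightRel Hsub)
        ((of (φ := φ) false g₂ * of (φ := φ) true g₁) ^ n) ∧
    Quotient.mk (QuotientGroup.rightRel Hsub)
        ((of (φ := φ) true g₁ * of (φ := φ) false g₂) ^ n) ≠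
      Quotient.mk (QuotientGroup.rightRel Hsub) (1 : PushoutI φ) ∧
    Quotient.mk (QuotientGroup.rightRel Hsub)
        ((of (φ := φ) false g₂ * of (φ := φ) true g₁) ^ n) ≠
      Quotient.mk (QuotientGroup.rightRel Hsub) (1 : PushoutI φ) ∧
    ∀ p : (schreierGraph Hsub S).Walk
        (Quotient.mk (QuotientGroup.rightRel Hsub)
          ((of (φ := φ) true g₁ * of (φ := φ) false g₂) ^ n))
        (Quotient.mk (QuotientGroup.rightRel Hsub)
          ((of (φ := φ) false g₂ * of (φ := φ) true g₁) ^ n)),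
      Quotient.mk (QuotientGroup.rightRel Hsub) (1 : PushoutI φ) ∈ p.support := by
  subst hHsub hS
  have hx := hasFstIdx_pow (φ := φ) (by decide) hg₁ hg₂ (n := n) (by omega)
  have hy := hasFstIdx_pow (φ := φ) (by decide) hg₂ hg₁ (n := n) (by omega)
  have hS : ∀ s ∈ of (φ := φ) true '' (S₁ : Set (G true)) ∪ of false '' S₂,
      ∃ i, ∃ t : G i, of i t = s := by
    rintro s (⟨t, -, rfl⟩ | ⟨t, -, rfl⟩) <;> exact ⟨_, t, rfl⟩
  refine ⟨fun e => ?_, fun e => ?_, fun e => ?_, fun p => ?_⟩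
  · exact absurd ((hx.of_mk_eq e).unique hinj hy) (by decide)
  · exact hx.notMem_range hinj (QuotientGroup.mk_rightRel_eq_mk_one_iff.1 e)
  · exact hy.notMem_range hinj (QuotientGroup.mk_rightRel_eq_mk_one_iff.1 e)
  · by_contra h1
    exact absurd ((hx.of_schreierGraph_walk hS p h1).unique hinj hy) (by decide)

open Monoid PushoutI in
/-- In an amalgamated free product `G₁ *_H G₂` with proper embeddings, for nontrivial coset
representatives `g₁, g₂`, the cosets `H(g₁g₂)ⁿ` and `H(g₂g₁)ⁿ` are distinct and lie in distinct
connected components of the Schreier graph of `H` after removing the vertex `H`. -/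
theorem stmt_16 {H : Type*} {G : Bool → Type*} [Group H] [∀ i, Group (G i)]
    (φ : ∀ i, H →* G i) (hinj : ∀ i, Function.Injective (φ i))
    (hproper : ∀ i, ¬ Function.Surjective (φ i))
    (S₁ : Finset (G true)) (hsym₁ : ∀ s ∈ S₁, s⁻¹ ∈ S₁)
    (hgen₁ : Subgroup.closure (S₁ : Set (G true)) = ⊤)
    (S₂ : Finset (G false)) (hsym₂ : ∀ s ∈ S₂, s⁻¹ ∈ S₂)
    (hgen₂ : Subgroup.closure (S₂ : Set (G false)) = ⊤)
    (g₁ : G true) (hg₁ : g₁ ∉ (φ true).range)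
    (g₂ : G false) (hg₂ : g₂ ∉ (φ false).range)
    (n : ℕ) (hn : 1 ≤ n)
    (Hsub : Subgroup (PushoutI φ)) (hHsub : Hsub = (base φ).range)
    (S : Set (PushoutI φ))
    (hS : S = (of (φ := φ) true) '' (S₁ : Set (G true)) ∪
      (of (φ := φ) false) '' (S₂ : Set (G false))) :
    Quotient.mk (QuotientGroup.rightRel Hsub)
        ((of (φ := φ) true g₁ * of (φ := φ) false g₂) ^ n) ≠
      Quotient.mk (QuotientGroup.rightRel Hsub)
        ((of (φ := φ) false g₂ * of (φ := φ) true g₁) ^ n) ∧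
    Quotient.mk (QuotientGroup.rightRel Hsub)
        ((of (φ := φ) true g₁ * of (φ := φ) false g₂) ^ n) ≠
      Quotient.mk (QuotientGroup.rightRel Hsub) (1 : PushoutI φ) ∧
    Quotient.mk (QuotientGroup.rightRel Hsub)
        ((of (φ := φ) false g₂ * of (φ := φ) true g₁) ^ n) ≠
      Quotient.mk (QuotientGroup.rightRel Hsub) (1 : PushoutI φ) ∧
    ∀ p : (schreierGraph Hsub S).Walk
        (Quotient.mk (QuotientGroup.rightRel Hsub)
          ((of (φ := φ) true g₁ * of (φ := φ) false g₂) ^ n))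
        (Quotient.mk (QuotientGroup.rightRel Hsub)
          ((of (φ := φ) false g₂ * of (φ := φ) true g₁) ^ n)),
      Quotient.mk (QuotientGroup.rightRel Hsub) (1 : PushoutI φ) ∈ p.support :=
  stmt_16_general φ hinj S₁ S₂ g₁ hg₁ g₂ hg₂ n hn Hsub hHsub S hS
end
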